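/- arXiv:math/0612689 — 4 statements merged into one kernel-verified Lean document; each statement's English description precedes it below -/
import Mathlib

section
/- Let 𝒜 be a Hom-finite triangulated k-category with Serre functor F. Then 𝒜 is a Calabi-Yau category if and only if there exists a natural isomorphism η^F : F∘[1] → [1]∘F such that (F, η^F) is a triangle functor and (F, η^F) is naturally isomorphic, as a triangle functor, to ([d], (−1)^d Id_{[d+1]}) for some integer d. -/
open CategoryTheory CategoryTheory.Limits CategoryTheory.Pretriangulated

universe v u

namespace CYPaper

variable (k : Type u) [Field k]
variable (C : Type u) [Category.{v} C] [Preadditive C] [Linear k C]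
  [HasZeroObject C] [HasShift C ℤ] [∀ n : ℤ, (shiftFunctor C n).Additive]
  [Pretriangulated C]

/-- `X` is a `d`-th Calabi-Yau object: there is an isomorphism
`Hom(X,-) ≅ D Hom(-, X⟦d⟧)`, natural in the variable. -/
def IsCYObj (d : ℤ) (X : C) : Prop :=
  ¬ IsZero X ∧
    ∃ η : ∀ Z : C, (X ⟶ Z) ≃ₗ[k] Module.Dual k (Z ⟶ X⟦d⟧),
      ∀ {Z W : C} (f : Z ⟶ W) (u : X ⟶ Z) (w : W ⟶ X⟦d⟧),
        η W (u ≫ f) w = η Z u (f ≫ w)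

variable {C}

/-- A biproduct decomposition `X ≅ A ⊕ B`, expressed without assuming
the existence of biproducts. -/
def IsDecomp (X A B : C) : Prop :=
  ∃ (iA : A ⟶ X) (iB : B ⟶ X) (pA : X ⟶ A) (pB : X ⟶ B),
    iA ≫ pA = 𝟙 A ∧ iB ≫ pB = 𝟙 B ∧ iA ≫ pB = 0 ∧ iB ≫ pA = 0 ∧
      pA ≫ iA + pB ≫ iB = 𝟙 X

/-- A direct sum decomposition `X ≅ X₁ ⊕ ⋯ ⊕ X_r`. -/
def IsDirectSumDecomp (X : C) {r : ℕ} (Xs : Fin r → C) : Prop :=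
  ∃ (ι : ∀ j, Xs j ⟶ X) (π : ∀ j, X ⟶ Xs j),
    (∀ j, ι j ≫ π j = 𝟙 (Xs j)) ∧ (∀ j j', j ≠ j' → ι j ≫ π j' = 0) ∧
      (∑ j, π j ≫ ι j) = 𝟙 X

/-- An object is indecomposable if it is non-zero and admits no non-trivial
direct sum decomposition. -/
def Indec (X : C) : Prop :=
  ¬ IsZero X ∧ ∀ A B : C, IsDecomp X A B → IsZero A ∨ IsZero B

variable (C) in
/-- The category is Krull-Schmidt: Hom-finite and any indecomposable object has
local endomorphism ring. -/
def KrullSchmidt : Prop :=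
  ∀ X : C, Indec X → IsLocalRing (End X)

/-- Auslander-Reiten triangle. -/
def IsARTriangle (T : Triangle C) : Prop :=
  (T ∈ distTriang C) ∧ Indec T.obj₁ ∧ Indec T.obj₃ ∧ T.mor₃ ≠ 0 ∧
    ∀ (Z' : C) (t : Z' ⟶ T.obj₃),
      (¬ ∃ s : T.obj₃ ⟶ Z', s ≫ t = 𝟙 T.obj₃) → ∃ t' : Z' ⟶ T.obj₂, t = t' ≫ T.mor₂

variable (C) in
/-- A right Serre functor on a Hom-finite `k`-linear category. -/
structure RightSerre where
  F : C ⥤ C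
  additive : F.Additive
  linear : F.Linear k
  η : ∀ A B : C, (A ⟶ B) ≃ₗ[k] Module.Dual k (B ⟶ F.obj A)
  nat_right : ∀ {A B B' : C} (g : B ⟶ B') (u : A ⟶ B) (w : B' ⟶ F.obj A),
    η A B' (u ≫ g) w = η A B u (g ≫ w)
  nat_left : ∀ {A A' B : C} (f : A' ⟶ A) (u : A ⟶ B) (w : B ⟶ F.obj A'),
    η A' B (f ≫ u) w = η A B u (w ≫ F.map f)

variable (C) in
/-- A Serre functor: a right Serre functor which is an equivalence. -/
structure Serre extends RightSerre k C where
  isEquiv : F.IsEquivalence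

/-- A minimal `d`-th Calabi-Yau object: a `d`-th CY object no proper direct
summand of which is a `d`-th CY object. -/
def IsMinCYObj (d : ℤ) (X : C) : Prop :=
  IsCYObj k C d X ∧
    ∀ A B : C, IsDecomp X A B → ¬ IsZero B → ¬ IsCYObj k C d A

end CYPaper

namespace CYPaper

open CategoryTheory CategoryTheory.Limits CategoryTheory.Pretriangulated

variable {C : Type u} [Category.{v} C] [Preadditive C]
  [HasZeroObject C] [HasShift C ℤ] [∀ n : ℤ, (shiftFunctor C n).Additive]
  [Pretriangulated C]
variable {D : Type u} [Category.{v} D] [Preadditive D]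
  [HasZeroObject D] [HasShift D ℤ] [∀ n : ℤ, (shiftFunctor D n).Additive]
  [Pretriangulated D]

/-- `(F, η)` is a triangle functor: `F` is additive, `η : F ∘ [1] ≅ [1] ∘ F`, and
every distinguished triangle `X → Y → Z → X⟦1⟧` with third map `h` is sent to the
distinguished triangle with third map `F h ≫ η_X`. -/
def IsTriangleFunctor (F : C ⥤ D)
    (η : shiftFunctor C (1 : ℤ) ⋙ F ≅ F ⋙ shiftFunctor D (1 : ℤ)) : Prop :=
  F.Additive ∧
    ∀ T ∈ distTriang C,
      Triangle.mk (F.map T.mor₁) (F.map T.mor₂) (F.map T.mor₃ ≫ η.hom.app T.obj₁)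
        ∈ distTriang D

end CYPaper

/-!
If `ξ : F ≅ [d]`, transport along `ξ` the commutation `(-1)^d · ([1][d] ≅ [d][1])` of `[d]`
with `[1]`. With this sign `[d]` is a triangle functor, because shifting a distinguished
triangle by `d` multiplies its three maps by `(-1)^d`; and being a triangle functor is
invariant under natural isomorphism. The converse implication is immediate.
-/

open CategoryTheory CategoryTheory.Limits CategoryTheory.Pretriangulated CYPaper

namespace CYPaper

section Transport

variable {C D : Type*} [Category* C] [Category* D] [HasShift C ℤ] [HasShift D ℤ]

def transportShiftComm {F G : C ⥤ D} (e : F ≅ G)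
    (η : shiftFunctor C (1 : ℤ) ⋙ G ≅ G ⋙ shiftFunctor D (1 : ℤ)) :
    shiftFunctor C (1 : ℤ) ⋙ F ≅ F ⋙ shiftFunctor D (1 : ℤ) :=
  Functor.isoWhiskerLeft _ e ≪≫ η ≪≫ Functor.isoWhiskerRight e.symm _

lemma transportShiftComm_compat {F G : C ⥤ D} (e : F ≅ G)
    (η : shiftFunctor C (1 : ℤ) ⋙ G ≅ G ⋙ shiftFunctor D (1 : ℤ)) (A : C) :
    e.hom.app (A⟦(1 : ℤ)⟧) ≫ η.hom.app A =
      (transportShiftComm e η).hom.app A ≫ (e.hom.app A)⟦(1 : ℤ)⟧' := by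
  simp [transportShiftComm, ← Functor.map_comp]

end Transport

variable {C : Type u} [Category.{v} C] [Preadditive C]
  [HasZeroObject C] [HasShift C ℤ] [∀ n : ℤ, (shiftFunctor C n).Additive]
  [Pretriangulated C]
variable {D : Type u} [Category.{v} D] [Preadditive D]
  [HasZeroObject D] [HasShift D ℤ] [∀ n : ℤ, (shiftFunctor D n).Additive]
  [Pretriangulated D]

lemma IsTriangleFunctor.ofIso {F G : C ⥤ D} (e : F ≅ G)
    {η : shiftFunctor C (1 : ℤ) ⋙ G ≅ G ⋙ shiftFunctor D (1 : ℤ)}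
    (h : IsTriangleFunctor G η) : IsTriangleFunctor F (transportShiftComm e η) := by
  obtain ⟨_, hG⟩ := h
  refine ⟨Functor.additive_of_iso e.symm, fun T hT => ?_⟩
  refine isomorphic_distinguished _ (hG T hT) _
    (Triangle.isoMk _ _ (e.app _) (e.app _) (e.app _) ?_ ?_ ?_)
  · exact e.hom.naturality T.mor₁
  · exact e.hom.naturality T.mor₂
  · have h : (F.map T.mor₃ ≫ (transportShiftComm e η).hom.app T.obj₁) ≫
        (e.hom.app T.obj₁)⟦(1 : ℤ)⟧' = e.hom.app T.obj₃ ≫ G.map T.mor₃ ≫ η.hom.app T.obj₁ := by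
      rw [Category.assoc, ← transportShiftComm_compat, e.hom.naturality_assoc]
    exact h

lemma isTriangleFunctor_shiftFunctor (d : ℤ) :
    IsTriangleFunctor (shiftFunctor C d) (d.negOnePow • shiftFunctorComm C (1 : ℤ) d) := by
  refine ⟨inferInstance, fun T hT => ?_⟩
  -- `Triangle.shiftFunctor` signs all three maps; rescaling two vertices by the sign
  -- moves it onto the third map alone.
  refine isomorphic_distinguished _ (Triangle.shift_distinguished T hT d) _
    (Triangle.isoMk _ _ (d.negOnePow • Iso.refl _) (Iso.refl _) (d.negOnePow • Iso.refl _)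
      ?_ ?_ ?_)
  · have h : T.mor₁⟦d⟧' ≫ 𝟙 _ = (d.negOnePow • 𝟙 _) ≫ (d.negOnePow • T.mor₁⟦d⟧') := by
      simp [smul_smul]
    exact h
  · have h : T.mor₂⟦d⟧' ≫ (d.negOnePow • 𝟙 _) = 𝟙 _ ≫ (d.negOnePow • T.mor₂⟦d⟧') := by
      simp
    exact h
  · have h : (T.mor₃⟦d⟧' ≫ (d.negOnePow • shiftFunctorComm C (1 : ℤ) d).hom.app T.obj₁) ≫
        (d.negOnePow • 𝟙 _)⟦(1 : ℤ)⟧' =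
        (d.negOnePow • 𝟙 _) ≫
          (d.negOnePow • T.mor₃⟦d⟧' ≫ (shiftFunctorComm C 1 d).hom.app T.obj₁) := by
      simp [smul_smul]
    exact h

end CYPaper

/-- Proposition 2.2, Keller; Van den Bergh. Let `𝒜` be a Hom-finite
triangulated `k`-category with Serre functor `F`. Then `𝒜` is a Calabi-Yau category
(i.e. `F ≅ [d]` for some integer `d`) if and only if there is a natural isomorphism
`η : F ∘ [1] ≅ [1] ∘ F` such that `(F, η)` is a triangle functor and `(F, η)` is
naturally isomorphic, as a triangle functor, to `([d], (-1)^d Id_{[d+1]})` for some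
integer `d`. -/
theorem stmt_0 (k : Type u) [Field k] (C : Type u) [Category.{v} C] [Preadditive C]
    [Linear k C] [HasZeroObject C] [HasShift C ℤ]
    [∀ n : ℤ, (shiftFunctor C n).Additive] [Pretriangulated C]
    [∀ X Y : C, FiniteDimensional k (X ⟶ Y)]
    (S : Serre k C) :
    (∃ d : ℤ, Nonempty (S.F ≅ shiftFunctor C d)) ↔
      ∃ η : shiftFunctor C (1 : ℤ) ⋙ S.F ≅ S.F ⋙ shiftFunctor C (1 : ℤ),
        IsTriangleFunctor S.F η ∧
        ∃ (d : ℤ) (ξ : S.F ≅ shiftFunctor C d),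
          ∀ A : C,
            ξ.hom.app (A⟦(1 : ℤ)⟧) ≫
                ((((-1 : ℤˣ) ^ d : ℤˣ) : ℤ) • (shiftFunctorComm C (1 : ℤ) d).hom.app A) =
              η.hom.app A ≫ (ξ.hom.app A)⟦(1 : ℤ)⟧' := by
  constructor
  · rintro ⟨d, ⟨ξ⟩⟩
    exact ⟨_, (isTriangleFunctor_shiftFunctor d).ofIso ξ, d, ξ,
      transportShiftComm_compat ξ (d.negOnePow • shiftFunctorComm C (1 : ℤ) d)⟩
  · rintro ⟨-, -, d, ξ, -⟩
    exact ⟨d, ⟨ξ⟩⟩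
end

section
/- Let 𝒜 be a Hom-finite Krull-Schmidt triangulated k-category and X an indecomposable object of 𝒜. Then X is a d-th Calabi-Yau object if and only if there exists an Auslander-Reiten triangle of the form X[d−1] → Y → X → X[d]. -/
open CategoryTheory CategoryTheory.Limits CategoryTheory.Pretriangulated

universe v u

open CategoryTheory CategoryTheory.Limits CategoryTheory.Pretriangulated CYPaper

/-!
Under the Calabi-Yau duality `End X ≅ D Hom(X, X⟦d⟧)`, a nonzero functional on the local ring
`End X` vanishing on its non-units corresponds to a nonzero `H : X ⟶ X⟦d⟧` killed by every
non-retraction into `X`; the cocone of `H` is then an Auslander-Reiten triangle.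

Conversely, the connecting morphism `H` of an Auslander-Reiten triangle is killed by every
non-retraction into `X` and, because `End X⟦d⟧` is local, by every non-section out of `X⟦d⟧`.
Rotating triangles, every nonzero morphism out of `X` or into `X⟦d⟧` is then a factor of `H`,
so for a functional `φ` with `φ H ≠ 0` the pairing `(u, w) ↦ φ (u ≫ w)` is nondegenerate on both
sides, hence perfect by Hom-finiteness.
-/

namespace CYPaper

section Indecomposable

variable {C : Type u} [Category.{v} C] [Preadditive C]

lemma IsDecomp.map {D : Type*} [Category D] [Preadditive D] (F : C ⥤ D) [F.Additive]
    {X A B : C} (h : IsDecomp X A B) : IsDecomp (F.obj X) (F.obj A) (F.obj B) := by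
  obtain ⟨iA, iB, pA, pB, hA, hB, hAB, hBA, hsum⟩ := h
  refine ⟨F.map iA, F.map iB, F.map pA, F.map pB, ?_, ?_, ?_, ?_, ?_⟩ <;>
    simp only [← F.map_comp, ← F.map_add, hA, hB, hAB, hBA, hsum, F.map_id, F.map_zero]

lemma IsDecomp.of_iso {X X' A B : C} (e : X ≅ X') (h : IsDecomp X' A B) : IsDecomp X A B := by
  obtain ⟨iA, iB, pA, pB, hA, hB, hAB, hBA, hsum⟩ := h
  refine ⟨iA ≫ e.inv, iB ≫ e.inv, e.hom ≫ pA, e.hom ≫ pB, ?_, ?_, ?_, ?_, ?_⟩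
  · simpa using hA
  · simpa using hB
  · simpa using hAB
  · simpa using hBA
  · calc _ = e.hom ≫ (pA ≫ iA + pB ≫ iB) ≫ e.inv := by simp
      _ = 𝟙 X := by simp [hsum]

variable [HasShift C ℤ] [∀ n : ℤ, (shiftFunctor C n).Additive]

lemma isZero_of_isZero_shift {X : C} (n : ℤ) (h : IsZero (X⟦n⟧)) : IsZero X :=
  ((shiftFunctor C (-n)).map_isZero h).of_iso (shiftShiftNeg X n).symm

lemma Indec.shift {X : C} (hX : Indec X) (n : ℤ) : Indec (X⟦n⟧) := by
  refine ⟨fun h => hX.1 (isZero_of_isZero_shift n h), fun A B h => ?_⟩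
  have hdec : IsDecomp X (A⟦-n⟧) (B⟦-n⟧) :=
    (h.map (shiftFunctor C (-n))).of_iso (shiftShiftNeg X n).symm
  exact (hX.2 _ _ hdec).imp (isZero_of_isZero_shift (-n)) (isZero_of_isZero_shift (-n))

end Indecomposable

lemma not_exists_iso_comp_comp_eq_id {C : Type u} [Category.{v} C] {A B V : C} (e : A ≅ B)
    {v : B ⟶ V} (hv : ¬ ∃ p : V ⟶ B, v ≫ p = 𝟙 B) : ¬ ∃ p : V ⟶ A, (e.hom ≫ v) ≫ p = 𝟙 A := by
  rintro ⟨p, hp⟩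
  exact hv ⟨p ≫ e.hom, by simpa using e.inv ≫= hp =≫ e.hom⟩

section Triangles

variable {C : Type u} [Category.{v} C] [Preadditive C] [HasZeroObject C] [HasShift C ℤ]
  [∀ n : ℤ, (shiftFunctor C n).Additive] [Pretriangulated C]

lemma isARTriangle_of_comp_mor₃_eq_zero {T : Triangle C} (hT : T ∈ distTriang C)
    (h₁ : Indec T.obj₁) (h₃ : Indec T.obj₃) (hne : T.mor₃ ≠ 0)
    (h : ∀ (Z' : C) (t : Z' ⟶ T.obj₃), (¬ ∃ s : T.obj₃ ⟶ Z', s ≫ t = 𝟙 T.obj₃) →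
      t ≫ T.mor₃ = 0) :
    IsARTriangle T :=
  ⟨hT, h₁, h₃, hne, fun Z' t ht => Triangle.coyoneda_exact₃ T hT t (h Z' t ht)⟩

lemma IsARTriangle.comp_mor₃_eq_zero {T : Triangle C} (hT : IsARTriangle T) {Z' : C}
    (t : Z' ⟶ T.obj₃) (ht : ¬ ∃ s : T.obj₃ ⟶ Z', s ≫ t = 𝟙 T.obj₃) : t ≫ T.mor₃ = 0 := by
  obtain ⟨t', rfl⟩ := hT.2.2.2.2 Z' t ht
  rw [Category.assoc, comp_distTriang_mor_zero₂₃ _ hT.1, comp_zero]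

lemma IsARTriangle.mor₃_comp_eq_zero (hKS : KrullSchmidt C) {T : Triangle C}
    (hT : IsARTriangle T) {V : C} (v : T.obj₁⟦(1 : ℤ)⟧ ⟶ V)
    (hv : ¬ ∃ p : V ⟶ T.obj₁⟦(1 : ℤ)⟧, v ≫ p = 𝟙 _) : T.mor₃ ≫ v = 0 := by
  have hloc : IsLocalRing (End (T.obj₁⟦(1 : ℤ)⟧)) := hKS _ (hT.2.1.shift 1)
  -- Otherwise the triangle on `T.mor₃ ≫ v` maps to `T`, giving `β` with `T.mor₃ ≫ β = T.mor₃`;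
  -- by locality `β` (then `v` is a section) or `1 - β` (then `T.mor₃ = 0`) is invertible.
  by_contra hδ
  let e := shiftNegShift V (1 : ℤ)
  obtain ⟨E, a, q, hE⟩ := distinguished_cocone_triangle₂ (T.mor₃ ≫ v ≫ e.inv)
  have hq : ¬ ∃ s : T.obj₃ ⟶ E, s ≫ q = 𝟙 T.obj₃ := by
    rintro ⟨s, hs⟩
    have h0 : q ≫ T.mor₃ ≫ v ≫ e.inv = 0 := comp_distTriang_mor_zero₂₃ _ hE
    exact hδ (by simpa [reassoc_of% hs] using s ≫= h0 =≫ e.hom)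
  obtain ⟨c, hc⟩ := hT.2.2.2.2 E q hq
  obtain ⟨α, -, hα⟩ := complete_distinguished_triangle_morphism₁ _ T hE hT.1 c (𝟙 _)
    ((Category.comp_id _).trans hc)
  let β : End (T.obj₁⟦(1 : ℤ)⟧) := v ≫ e.inv ≫ α⟦(1 : ℤ)⟧'
  have hβ : T.mor₃ ≫ β = T.mor₃ := by
    have hα' : (T.mor₃ ≫ v ≫ e.inv) ≫ α⟦(1 : ℤ)⟧' = T.mor₃ := hα.trans (Category.id_comp _)
    simpa only [β, Category.assoc] using hα'
  rcases IsLocalRing.isUnit_or_isUnit_of_add_one (add_sub_cancel β 1) with hu | hu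
  · have := (isUnit_iff_isIso _).1 hu
    exact hv ⟨e.inv ≫ α⟦(1 : ℤ)⟧' ≫ inv β,
      by simpa only [β, Category.assoc] using IsIso.hom_inv_id β⟩
  · have := (isUnit_iff_isIso _).1 hu
    refine hT.2.2.2.1 ((cancel_mono (1 - β : End _)).1 ?_)
    rw [End.one_def, Preadditive.comp_sub, hβ, Category.comp_id, sub_self, zero_comp]

lemma exists_eq_comp_of_forall_nonretraction_comp_eq_zero {X M : C} {H : X ⟶ M}
    (hH : ∀ (Z' : C) (t : Z' ⟶ X), (¬ ∃ s : X ⟶ Z', s ≫ t = 𝟙 X) → t ≫ H = 0)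
    {Z : C} (u : X ⟶ Z) (hu : u ≠ 0) : ∃ w : Z ⟶ M, H = u ≫ w := by
  obtain ⟨W, f, h, hT⟩ := distinguished_cocone_triangle₁ u
  have hf : ¬ ∃ s : X ⟶ W, s ≫ f = 𝟙 X := by
    rintro ⟨s, hs⟩
    have h0 : f ≫ u = 0 := comp_distTriang_mor_zero₁₂ _ hT
    exact hu (by simpa [reassoc_of% hs] using s ≫= h0)
  exact Triangle.yoneda_exact₂ _ hT H (hH W f hf)

lemma exists_eq_comp_of_forall_comp_nonsection_eq_zero {X M : C} {H : X ⟶ M}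
    (hH : ∀ (V : C) (v : M ⟶ V), (¬ ∃ p : V ⟶ M, v ≫ p = 𝟙 M) → H ≫ v = 0)
    {Z : C} (w : Z ⟶ M) (hw : w ≠ 0) : ∃ u : X ⟶ Z, H = u ≫ w := by
  obtain ⟨Q, c, h, hT⟩ := distinguished_cocone_triangle w
  have hc : ¬ ∃ p : Q ⟶ M, c ≫ p = 𝟙 M := by
    rintro ⟨p, hp⟩
    have h0 : w ≫ c = 0 := comp_distTriang_mor_zero₁₂ _ hT
    exact hw (by simpa [hp] using h0 =≫ p)
  exact Triangle.coyoneda_exact₂ _ hT H (hH Q c hc)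

end Triangles

def nonunitsSubmodule (k A : Type*) [Field k] [Ring A] [Algebra k A] [IsLocalRing A] :
    Submodule k A where
  carrier := nonunits A
  add_mem' := IsLocalRing.nonunits_add
  zero_mem' := zero_mem_nonunits.2 zero_ne_one
  smul_mem' c a ha := by
    rcases eq_or_ne c 0 with rfl | hc
    · rw [zero_smul]
      exact zero_mem_nonunits.2 zero_ne_one
    · exact fun h => ha ((isUnit_smul_iff (Units.mk0 c hc) a).1 h)

section CalabiYau

variable {k : Type u} [Field k] {C : Type u} [Category.{v} C] [Preadditive C] [Linear k C]
  [HasShift C ℤ] [∀ A B : C, FiniteDimensional k (A ⟶ B)]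

lemma isCYObj_of_forall_eq_comp {d : ℤ} {X : C} (hX : ¬ IsZero X) {H : X ⟶ X⟦d⟧} (hH : H ≠ 0)
    (hl : ∀ (Z : C) (u : X ⟶ Z), u ≠ 0 → ∃ w, H = u ≫ w)
    (hr : ∀ (Z : C) (w : Z ⟶ X⟦d⟧), w ≠ 0 → ∃ u, H = u ≫ w) :
    IsCYObj k C d X := by
  obtain ⟨t, ht⟩ : ∃ t : Module.Dual k (X ⟶ X⟦d⟧), t H ≠ 0 := by
    by_contra! h
    exact hH ((Module.forall_dual_apply_eq_zero_iff k H).1 h)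
  let p (Z : C) : (X ⟶ Z) →ₗ[k] (Z ⟶ X⟦d⟧) →ₗ[k] k := (Linear.comp X Z (X⟦d⟧)).compr₂ t
  have hp (Z : C) : (p Z).IsPerfPair := by
    refine .of_injective ((injective_iff_map_eq_zero _).2 fun u hu => ?_)
      ((injective_iff_map_eq_zero _).2 fun w hw => ?_)
    · by_contra h0
      obtain ⟨w, rfl⟩ := hl Z u h0
      exact ht (LinearMap.congr_fun hu w)
    · by_contra h0
      obtain ⟨u, rfl⟩ := hr Z w h0
      exact ht (LinearMap.congr_fun hw u)
  exact ⟨hX, fun Z => (p Z).toPerfPair, fun f u w => by simp [p]⟩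

lemma IsCYObj.exists_ne_zero_forall_comp_eq_zero {d : ℤ} {X : C} (hX : IsCYObj k C d X)
    (hloc : IsLocalRing (End X)) :
    ∃ H : X ⟶ X⟦d⟧, H ≠ 0 ∧
      ∀ (Z' : C) (t : Z' ⟶ X), (¬ ∃ s : X ⟶ Z', s ≫ t = 𝟙 X) → t ≫ H = 0 := by
  obtain ⟨-, η, hη⟩ := hX
  let Φ := (nonunitsSubmodule k (End X)).map (η X).toLinearMap
  have hΦ : Φ ≠ ⊤ := by
    rw [Ne, Submodule.map_eq_top_iff, eq_top_iff]
    exact fun h => one_notMem_nonunits (α := End X) (h Submodule.mem_top)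
  obtain ⟨H, hHΦ, hH⟩ := Submodule.exists_mem_ne_zero_of_ne_bot (p := Φ.dualCoannihilator)
      fun h => hΦ <| by
    rw [← Subspace.dualCoannihilator_dualAnnihilator_eq (W := Φ), h,
      Submodule.dualAnnihilator_bot]
  refine ⟨H, hH, fun Z' t ht => ?_⟩
  have hut (u : X ⟶ Z') : u ≫ t ∈ nonunitsSubmodule k (End X) := fun hu => by
    have := (isUnit_iff_isIso (u ≫ t)).1 hu
    exact ht ⟨inv (u ≫ t) ≫ u, by simp⟩
  rw [← Module.forall_dual_apply_eq_zero_iff k]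
  intro φ
  obtain ⟨u, rfl⟩ := (η Z').surjective φ
  rw [← hη]
  exact (Submodule.mem_dualCoannihilator _).1 hHΦ _ (Submodule.mem_map_of_mem (hut u))

end CalabiYau

end CYPaper

/-- **Statement 3** (Theorem 3.2, first part). Let `𝒜` be a Hom-finite Krull-Schmidt
triangulated `k`-category and `X` an indecomposable object. Then `X` is a `d`-th
Calabi-Yau object if and only if there exists an Auslander-Reiten triangle of the
form `X⟦d-1⟧ → Y → X → X⟦d⟧`. -/
theorem stmt_3 (k : Type u) [Field k] (C : Type u) [Category.{v} C] [Preadditive C]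
    [Linear k C] [HasZeroObject C] [HasShift C ℤ]
    [∀ n : ℤ, (shiftFunctor C n).Additive] [Pretriangulated C]
    [∀ X Y : C, FiniteDimensional k (X ⟶ Y)]
    (hKS : KrullSchmidt C)
    (d : ℤ) (X : C) (hX : Indec X) :
    IsCYObj k C d X ↔
      ∃ (Y : C) (f : X⟦d - 1⟧ ⟶ Y) (g : Y ⟶ X) (h : X ⟶ X⟦d - 1⟧⟦(1 : ℤ)⟧),
        IsARTriangle (Triangle.mk f g h) := by
  let e : X⟦d⟧ ≅ X⟦d - 1⟧⟦(1 : ℤ)⟧ := (shiftFunctorAdd' C (d - 1) 1 d (by omega)).app X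
  constructor
  · intro hCY
    obtain ⟨H, hH, hHt⟩ := hCY.exists_ne_zero_forall_comp_eq_zero (hKS X hX)
    obtain ⟨Y, f, g, hT⟩ := distinguished_cocone_triangle₂ (H ≫ e.hom)
    refine ⟨Y, f, g, H ≫ e.hom,
      isARTriangle_of_comp_mor₃_eq_zero hT (hX.shift _) hX ?_ fun Z' (t : Z' ⟶ X) ht => ?_⟩
    · exact (Preadditive.IsIso.comp_right_eq_zero _ _).not.2 hH
    · change t ≫ H ≫ e.hom = 0
      rw [← Category.assoc, hHt Z' t ht, zero_comp]
  · rintro ⟨Y, f, g, h, hT⟩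
    refine isCYObj_of_forall_eq_comp hX.1 (H := h ≫ e.inv) ?_
      (fun Z u hu => exists_eq_comp_of_forall_nonretraction_comp_eq_zero (fun Z' t ht => ?_) u hu)
      (fun Z w hw => exists_eq_comp_of_forall_comp_nonsection_eq_zero (fun V v hv => ?_) w hw)
    · exact (Preadditive.IsIso.comp_right_eq_zero _ _).not.2 hT.2.2.2.1
    · have h0 : t ≫ h = 0 := hT.comp_mor₃_eq_zero t ht
      rw [← Category.assoc, h0, zero_comp]
    · exact (Category.assoc _ _ _).trans
        (hT.mor₃_comp_eq_zero hKS (e.inv ≫ v) (not_exists_iso_comp_comp_eq_id e.symm hv))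
end

section
/- Let 𝒜 be a Hom-finite Krull-Schmidt triangulated k-category with Serre functor F. Then every d-th Calabi-Yau object of 𝒜 is a direct sum of finitely many minimal d-th Calabi-Yau objects. -/
open CategoryTheory CategoryTheory.Limits CategoryTheory.Pretriangulated

universe v u

namespace CYPaper

variable (k : Type u) [Field k]
variable (C : Type u) [Category.{v} C] [Preadditive C] [Linear k C]
  [HasZeroObject C] [HasShift C ℤ] [∀ n : ℤ, (shiftFunctor C n).Additive]
  [Pretriangulated C]

variable {C}

section LocalRingAux

variable {R : Type*} [Ring R] [IsLocalRing R]

lemma LRidem {e : R} (he : e * e = e) : e = 0 ∨ e = 1 := by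
  rcases IsLocalRing.isUnit_or_isUnit_of_add_one (a := e) (b := 1 - e) (by noncomm_ring) with h | h
  · right
    rcases h with ⟨u, hu⟩
    have h3 : (↑u⁻¹ : R) * (e * e) = ↑u⁻¹ * e := by rw [he]
    rw [← hu, ← mul_assoc, Units.inv_mul, one_mul, hu] at h3
    exact h3
  · left
    have h2 : (1 - e) * (1 - e) = 1 - e := by
      rw [mul_sub, sub_mul, sub_mul, mul_one, one_mul, mul_one, he]; abel
    rcases h with ⟨u, hu⟩
    have h3 : (↑u⁻¹ : R) * ((1-e) * (1-e)) = ↑u⁻¹ * (1-e) := by rw [h2]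
    rw [← hu, ← mul_assoc, Units.inv_mul, one_mul, hu] at h3
    have h4 : (1:R) - e = 1 := h3
    have h5 : e = (1:R) - (1 - e) := by abel
    rw [h4] at h5
    rw [h5]; abel

lemma LRunit_of_mul_eq_one {u x : R} (h : u * x = 1) : IsUnit x ∧ IsUnit u := by
  have hxu : (x * u) * (x * u) = x * u := by
    calc (x*u)*(x*u) = x * (u * x) * u := by noncomm_ring
    _ = x * u := by rw [h, mul_one]
  rcases LRidem hxu with h0 | h1
  · exfalso
    have hx : x = 0 := by
      have h5 : x * (u * x) = (x * u) * x := by noncomm_ring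
      rw [h, mul_one, h0, zero_mul] at h5
      exact h5
    rw [hx, mul_zero] at h
    exact zero_ne_one h
  · exact ⟨isUnit_iff_exists.2 ⟨u, h1, h⟩, isUnit_iff_exists.2 ⟨x, h, h1⟩⟩

lemma LRunit_factors {a b : R} (h : IsUnit (a * b)) : IsUnit a ∧ IsUnit b := by
  rcases isUnit_iff_exists.1 h with ⟨c, hc1, hc2⟩
  have ha : IsUnit a := (LRunit_of_mul_eq_one (u := a) (x := b * c) (by rw [← mul_assoc, hc1])).2
  have hb : IsUnit b := (LRunit_of_mul_eq_one (u := c * a) (x := b) (by rw [mul_assoc, hc2])).1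
  exact ⟨ha, hb⟩

lemma LRunit_of_add {a b : R} (h : IsUnit (a + b)) : IsUnit a ∨ IsUnit b := by
  rcases isUnit_iff_exists.1 h with ⟨c, hc1, hc2⟩
  have h6 : c * a + c * b = 1 := by rw [← mul_add, hc2]
  rcases IsLocalRing.isUnit_or_isUnit_of_add_one h6 with h' | h'
  · exact Or.inl (LRunit_factors h').2
  · exact Or.inr (LRunit_factors h').2

lemma LRexists_unit_of_sum {n : ℕ} {f : Fin n → R} (h : IsUnit (∑ i, f i)) :
    ∃ i, IsUnit (f i) := by
  induction n with
  | zero =>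
    exfalso
    simp only [Finset.univ_eq_empty, Finset.sum_empty] at h
    rcases isUnit_iff_exists.1 h with ⟨c, hc, -⟩
    rw [zero_mul] at hc
    exact zero_ne_one hc
  | succ n ih =>
    rw [Fin.sum_univ_succ] at h
    rcases LRunit_of_add h with h' | h'
    · exact ⟨0, h'⟩
    · rcases ih h' with ⟨i, hi⟩
      exact ⟨i.succ, hi⟩

end LocalRingAux

section Aux
set_option linter.unusedSectionVars false

variable {k : Type u} [Field k]
variable {C : Type u} [Category.{v} C] [Preadditive C] [Linear k C]
  [HasZeroObject C] [HasShift C ℤ] [∀ n : ℤ, (shiftFunctor C n).Additive]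
  [Pretriangulated C]

open Module

lemma not_isZero_iff (X : C) : ¬ IsZero X ↔ 𝟙 X ≠ 0 := by
  rw [IsZero.iff_id_eq_zero]

lemma IsDecomp.swap {X A B : C} (h : IsDecomp X A B) : IsDecomp X B A := by
  obtain ⟨iA, iB, pA, pB, h1, h2, h3, h4, h5⟩ := h
  exact ⟨iB, iA, pB, pA, h2, h1, h4, h3, by rw [add_comm]; exact h5⟩

lemma isDecomp_biprod (A B : C) : IsDecomp (A ⊞ B) A B :=
  ⟨biprod.inl, biprod.inr, biprod.fst, biprod.snd, by simp, by simp, by simp, by simp,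
    biprod.total⟩

lemma iso_of_isDecomp_isZero_left {X A B : C} (h : IsDecomp X A B) (hA : IsZero A) :
    Nonempty (B ≅ X) := by
  obtain ⟨iA, iB, pA, pB, h1, h2, h3, h4, h5⟩ := h
  refine ⟨⟨iB, pB, h2, ?_⟩⟩
  have hA0 : 𝟙 A = 0 := (IsZero.iff_id_eq_zero A).1 hA
  have : pA ≫ iA = 0 := by
    have : pA ≫ 𝟙 A ≫ iA = pA ≫ (0 : A ⟶ X) := by rw [hA0]; simp
    simpa using this
  rw [← h5, this, zero_add]

lemma finrank_pos_of_not_isZero [∀ X Y : C, FiniteDimensional k (X ⟶ Y)] {X : C}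
    (hX : ¬ IsZero X) : 0 < finrank k (X ⟶ X) := by
  rw [not_isZero_iff] at hX
  haveI : Nontrivial (X ⟶ X) := ⟨𝟙 X, 0, hX⟩
  exact Module.finrank_pos

lemma finrank_add_le_of_isDecomp [∀ X Y : C, FiniteDimensional k (X ⟶ Y)] {X A B : C}
    (h : IsDecomp X A B) :
    finrank k (A ⟶ A) + finrank k (B ⟶ B) ≤ finrank k (X ⟶ X) := by
  obtain ⟨iA, iB, pA, pB, h1, h2, h3, h4, h5⟩ := h
  let L : ((A ⟶ A) × (B ⟶ B)) →ₗ[k] (X ⟶ X) :=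
    { toFun := fun fg => pA ≫ fg.1 ≫ iA + pB ≫ fg.2 ≫ iB
      map_add' := by
        intro x y
        simp only [Prod.fst_add, Prod.snd_add, Preadditive.comp_add, Preadditive.add_comp]
        abel
      map_smul' := by
        intro c x
        simp only [Prod.smul_fst, Prod.smul_snd, Linear.comp_smul, Linear.smul_comp,
          RingHom.id_apply, smul_add] }
  have hinj : Function.Injective L := by
    rw [injective_iff_map_eq_zero]
    intro ⟨f, g⟩ hz
    simp only [L, LinearMap.coe_mk, AddHom.coe_mk] at hz
    have hf : f = 0 := by
      have := congrArg (fun t => iA ≫ t ≫ pA) hz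
      simpa [Preadditive.comp_add, Preadditive.add_comp, Category.assoc,
        reassoc_of% h1, reassoc_of% h3, h1, h3, h4] using this
    have hg : g = 0 := by
      have := congrArg (fun t => iB ≫ t ≫ pB) hz
      simpa [Preadditive.comp_add, Preadditive.add_comp, Category.assoc,
        reassoc_of% h2, reassoc_of% h4, h2, h3, h4] using this
    simp [hf, hg, Prod.ext_iff]
  have := LinearMap.finrank_le_finrank_of_injective hinj
  rwa [Module.finrank_prod] at this

end Aux

section DSD
set_option linter.unusedSectionVars false

variable {k : Type u} [Field k]
variable {C : Type u} [Category.{v} C] [Preadditive C] [Linear k C]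
  [HasZeroObject C] [HasShift C ℤ] [∀ n : ℤ, (shiftFunctor C n).Additive]
  [Pretriangulated C]

/-- Key double-sum computation. -/
lemma sum_comp_sum {n : ℕ} {Xs : Fin n → C} {U V W : C}
    (π : ∀ j, U ⟶ Xs j) (ι : ∀ j, Xs j ⟶ V) (π' : ∀ j, V ⟶ Xs j) (ι' : ∀ j, Xs j ⟶ W)
    (hii : ∀ j, ι j ≫ π' j = 𝟙 (Xs j)) (hij : ∀ j j', j ≠ j' → ι j ≫ π' j' = 0) :
    (∑ j, π j ≫ ι j) ≫ (∑ j, π' j ≫ ι' j) = ∑ j, π j ≫ ι' j := by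
  rw [Preadditive.sum_comp]
  refine Finset.sum_congr rfl ?_
  intro j _
  rw [Preadditive.comp_sum]
  rw [Finset.sum_eq_single j]
  · rw [Category.assoc, ← Category.assoc (ι j), hii j, Category.id_comp]
  · intro j' _ hj'
    rw [Category.assoc, ← Category.assoc (ι j), hij j j' (Ne.symm hj'), zero_comp, comp_zero]
  · intro h; exact absurd (Finset.mem_univ j) h

lemma dsd_biproduct {n : ℕ} (Xs : Fin n → C) : IsDirectSumDecomp (⨁ Xs) Xs :=
  ⟨biproduct.ι Xs, biproduct.π Xs, fun j => biproduct.ι_π_self Xs j,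
    fun j j' h => biproduct.ι_π_ne Xs h, biproduct.total⟩

lemma dsd_exists_obj {n : ℕ} (Xs : Fin n → C) : ∃ W, IsDirectSumDecomp W Xs :=
  ⟨_, dsd_biproduct Xs⟩

lemma IsDirectSumDecomp.of_iso {U V : C} {n : ℕ} {Xs : Fin n → C}
    (h : IsDirectSumDecomp U Xs) (e : U ≅ V) : IsDirectSumDecomp V Xs := by
  obtain ⟨ι, π, hii, hij, hsum⟩ := h
  refine ⟨fun j => ι j ≫ e.hom, fun j => e.inv ≫ π j, ?_, ?_, ?_⟩
  · intro j; rw [Category.assoc, e.hom_inv_id_assoc, hii]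
  · intro j j' hj; rw [Category.assoc, e.hom_inv_id_assoc, hij _ _ hj]
  · have h7 : ∑ j, (e.inv ≫ π j) ≫ ι j ≫ e.hom = e.inv ≫ (∑ j, π j ≫ ι j) ≫ e.hom := by
      rw [Preadditive.sum_comp, Preadditive.comp_sum]
      exact Finset.sum_congr rfl fun j _ => by simp [Category.assoc]
    rw [h7, hsum]
    simp

lemma IsDirectSumDecomp.iso_of_same {U V : C} {n : ℕ} {Xs : Fin n → C}
    (hU : IsDirectSumDecomp U Xs) (hV : IsDirectSumDecomp V Xs) : Nonempty (U ≅ V) := by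
  obtain ⟨ι, π, hii, hij, hsum⟩ := hU
  obtain ⟨ι', π', hii', hij', hsum'⟩ := hV
  refine ⟨⟨∑ j, π j ≫ ι' j, ∑ j, π' j ≫ ι j, ?_, ?_⟩⟩
  · rw [sum_comp_sum π ι' π' ι hii' hij', hsum]
  · rw [sum_comp_sum π' ι π ι' hii hij, hsum']

lemma IsDirectSumDecomp.of_components {U : C} {n : ℕ} {Xs Ys : Fin n → C}
    (h : IsDirectSumDecomp U Xs) (e : ∀ j, Ys j ≅ Xs j) : IsDirectSumDecomp U Ys := by
  obtain ⟨ι, π, hii, hij, hsum⟩ := h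
  refine ⟨fun j => (e j).hom ≫ ι j, fun j => π j ≫ (e j).inv, ?_, ?_, ?_⟩
  · intro j
    rw [Category.assoc, ← Category.assoc (ι j), hii j, Category.id_comp, Iso.hom_inv_id]
  · intro j j' hj
    rw [Category.assoc, ← Category.assoc (ι j), hij _ _ hj, zero_comp, comp_zero]
  · have : ∀ j, (π j ≫ (e j).inv) ≫ (e j).hom ≫ ι j = π j ≫ ι j := by
      intro j; rw [Category.assoc, (e j).inv_hom_id_assoc]
    rw [Finset.sum_congr rfl fun j _ => this j, hsum]

lemma IsDirectSumDecomp.reindex {U : C} {n m : ℕ} {Xs : Fin n → C}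
    (h : IsDirectSumDecomp U Xs) (σ : Fin m ≃ Fin n) :
    IsDirectSumDecomp U (fun j => Xs (σ j)) := by
  obtain ⟨ι, π, hii, hij, hsum⟩ := h
  refine ⟨fun j => ι (σ j), fun j => π (σ j), fun j => hii _, ?_, ?_⟩
  · intro j j' hj
    exact hij _ _ (fun hc => hj (σ.injective hc))
  · show ∑ j : Fin m, π (σ j) ≫ ι (σ j) = 𝟙 U
    exact (Equiv.sum_comp σ (fun j => π j ≫ ι j)).trans hsum

lemma IsDirectSumDecomp.map {U : C} {n : ℕ} {Xs : Fin n → C} (F : C ⥤ C) (hF : F.Additive)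
    (h : IsDirectSumDecomp U Xs) :
    IsDirectSumDecomp (F.obj U) (fun j => F.obj (Xs j)) := by
  haveI := hF
  obtain ⟨ι, π, hii, hij, hsum⟩ := h
  refine ⟨fun j => F.map (ι j), fun j => F.map (π j), ?_, ?_, ?_⟩
  · intro j; rw [← F.map_comp, hii, F.map_id]
  · intro j j' hj; rw [← F.map_comp, hij _ _ hj, F.map_zero]
  · have : ∀ j, F.map (ι j) ≫ F.map (π j) = 𝟙 _ := fun j => by rw [← F.map_comp, hii, F.map_id]
    calc (∑ j, F.map (π j) ≫ F.map (ι j)) = F.map (∑ j, π j ≫ ι j) := by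
          rw [F.map_sum]; exact Finset.sum_congr rfl fun j _ => (F.map_comp _ _).symm
    _ = 𝟙 _ := by rw [hsum, F.map_id]

lemma dsd_single (X : C) : IsDirectSumDecomp X (fun _ : Fin 1 => X) := by
  refine ⟨fun _ => 𝟙 X, fun _ => 𝟙 X, fun _ => by simp, ?_, by simp⟩
  intro j j' h
  exact absurd (Subsingleton.elim j j') h

lemma dsd_iso_of_matched {U V : C} {n m : ℕ} {Xs : Fin n → C} {Ys : Fin m → C}
    (hU : IsDirectSumDecomp U Xs) (hV : IsDirectSumDecomp V Ys) (σ : Fin n ≃ Fin m)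
    (hc : ∀ j, Nonempty (Xs j ≅ Ys (σ j))) : Nonempty (U ≅ V) := by
  have h1 : IsDirectSumDecomp V (fun j => Ys (σ j)) := hV.reindex σ
  have h2 : IsDirectSumDecomp V Xs := h1.of_components fun j => (hc j).some
  exact hU.iso_of_same h2

lemma isZero_of_dsd_empty {U : C} {Xs : Fin 0 → C} (h : IsDirectSumDecomp U Xs) :
    IsZero U := by
  obtain ⟨ι, π, hii, hij, hsum⟩ := h
  rw [IsZero.iff_id_eq_zero, ← hsum]
  simp

lemma dsd_concat {X A B : C} (hX : IsDecomp X A B) {r s : ℕ} {As : Fin r → C} {Bs : Fin s → C}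
    (hA : IsDirectSumDecomp A As) (hB : IsDirectSumDecomp B Bs) :
    IsDirectSumDecomp X (fun j => Sum.elim As Bs (finSumFinEquiv.symm j)) := by
  obtain ⟨iA, iB, pA, pB, h1, h2, h3, h4, h5⟩ := hX
  obtain ⟨ιA, πA, hiiA, hijA, hsumA⟩ := hA
  obtain ⟨ιB, πB, hiiB, hijB, hsumB⟩ := hB
  let ιS : ∀ x : Fin r ⊕ Fin s, (Sum.elim As Bs x ⟶ X) :=
    fun x => Sum.rec (fun i => ιA i ≫ iA) (fun i => ιB i ≫ iB) x
  let πS : ∀ x : Fin r ⊕ Fin s, (X ⟶ Sum.elim As Bs x) :=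
    fun x => Sum.rec (fun i => pA ≫ πA i) (fun i => pB ≫ πB i) x
  have hiiS : ∀ x, ιS x ≫ πS x = 𝟙 _ := by
    rintro (i | i)
    · show (ιA i ≫ iA) ≫ pA ≫ πA i = 𝟙 _
      rw [Category.assoc, ← Category.assoc iA, h1, Category.id_comp, hiiA]
    · show (ιB i ≫ iB) ≫ pB ≫ πB i = 𝟙 _
      rw [Category.assoc, ← Category.assoc iB, h2, Category.id_comp, hiiB]
  have hijS : ∀ x x', x ≠ x' → ιS x ≫ πS x' = 0 := by
    rintro (i | i) (i' | i') hne
    · show (ιA i ≫ iA) ≫ pA ≫ πA i' = 0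
      rw [Category.assoc, ← Category.assoc iA, h1, Category.id_comp,
        hijA i i' (by rintro rfl; exact hne rfl)]
    · show (ιA i ≫ iA) ≫ pB ≫ πB i' = 0
      rw [Category.assoc, ← Category.assoc iA, h3, zero_comp, comp_zero]
    · show (ιB i ≫ iB) ≫ pA ≫ πA i' = 0
      rw [Category.assoc, ← Category.assoc iB, h4, zero_comp, comp_zero]
    · show (ιB i ≫ iB) ≫ pB ≫ πB i' = 0
      rw [Category.assoc, ← Category.assoc iB, h2, Category.id_comp,
        hijB i i' (by rintro rfl; exact hne rfl)]
  have hsumS : (∑ x : Fin r ⊕ Fin s, πS x ≫ ιS x) = 𝟙 X := by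
    rw [Fintype.sum_sum_type]
    have hA' : (∑ i : Fin r, πS (Sum.inl i) ≫ ιS (Sum.inl i)) = pA ≫ iA := by
      have : ∀ i : Fin r, πS (Sum.inl i) ≫ ιS (Sum.inl i) = pA ≫ (πA i ≫ ιA i) ≫ iA := by
        intro i; show (pA ≫ πA i) ≫ ιA i ≫ iA = _; simp [Category.assoc]
      rw [Finset.sum_congr rfl fun i _ => this i]
      calc ∑ i : Fin r, pA ≫ (πA i ≫ ιA i) ≫ iA = pA ≫ (∑ i, πA i ≫ ιA i) ≫ iA := by
            rw [Preadditive.sum_comp, Preadditive.comp_sum]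
      _ = pA ≫ iA := by rw [hsumA, Category.id_comp]
    have hB' : (∑ i : Fin s, πS (Sum.inr i) ≫ ιS (Sum.inr i)) = pB ≫ iB := by
      have : ∀ i : Fin s, πS (Sum.inr i) ≫ ιS (Sum.inr i) = pB ≫ (πB i ≫ ιB i) ≫ iB := by
        intro i; show (pB ≫ πB i) ≫ ιB i ≫ iB = _; simp [Category.assoc]
      rw [Finset.sum_congr rfl fun i _ => this i]
      calc ∑ i : Fin s, pB ≫ (πB i ≫ ιB i) ≫ iB = pB ≫ (∑ i, πB i ≫ ιB i) ≫ iB := by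
            rw [Preadditive.sum_comp, Preadditive.comp_sum]
      _ = pB ≫ iB := by rw [hsumB, Category.id_comp]
    rw [hA', hB', h5]
  refine ⟨fun j => ιS (finSumFinEquiv.symm j), fun j => πS (finSumFinEquiv.symm j),
    fun j => hiiS _, ?_, ?_⟩
  · intro j j' hj
    exact hijS _ _ (fun hc => hj (finSumFinEquiv.symm.injective hc))
  · show ∑ j : Fin (r + s), πS (finSumFinEquiv.symm j) ≫ ιS (finSumFinEquiv.symm j) = 𝟙 X
    exact (Equiv.sum_comp finSumFinEquiv.symm (fun x => πS x ≫ ιS x)).trans hsumS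

end DSD

section Exchange
set_option linter.unusedSectionVars false

variable {k : Type u} [Field k]
variable {C : Type u} [Category.{v} C] [Preadditive C] [Linear k C]
  [HasZeroObject C] [HasShift C ℤ] [∀ n : ℤ, (shiftFunctor C n).Additive]
  [Pretriangulated C]

open Module

/-- Existence of decompositions into indecomposables. -/
lemma exists_indec_dsd [∀ X Y : C, FiniteDimensional k (X ⟶ Y)] :
    ∀ (N : ℕ) (X : C), finrank k (X ⟶ X) ≤ N → ¬ IsZero X →
      ∃ (r : ℕ), 0 < r ∧ ∃ (Xs : Fin r → C), (∀ j, Indec (Xs j)) ∧ IsDirectSumDecomp X Xs := by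
  intro N
  induction N with
  | zero =>
    intro X hle hX
    have := finrank_pos_of_not_isZero (k := k) hX
    omega
  | succ N ih =>
    intro X hle hX
    by_cases hInd : Indec X
    · exact ⟨1, Nat.one_pos, fun _ => X, fun _ => hInd, dsd_single X⟩
    · have hdec : ∃ A B : C, IsDecomp X A B ∧ ¬ IsZero A ∧ ¬ IsZero B := by
        rw [Indec, not_and_or] at hInd
        rcases hInd with h | h
        · exact absurd hX (not_not.2 (not_not.1 h))
        · push_neg at h
          obtain ⟨A, B, hAB, hA, hB⟩ := h
          exact ⟨A, B, hAB, hA, hB⟩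
      obtain ⟨A, B, hAB, hA, hB⟩ := hdec
      have hle' := finrank_add_le_of_isDecomp (k := k) hAB
      have hposA := finrank_pos_of_not_isZero (k := k) hA
      have hposB := finrank_pos_of_not_isZero (k := k) hB
      have hAN : finrank k (A ⟶ A) ≤ N := by omega
      have hBN : finrank k (B ⟶ B) ≤ N := by omega
      obtain ⟨rA, hrA, As, hAsInd, hAsD⟩ := ih A hAN hA
      obtain ⟨rB, hrB, Bs, hBsInd, hBsD⟩ := ih B hBN hB
      refine ⟨rA + rB, by omega, _, ?_, dsd_concat hAB hAsD hBsD⟩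
      intro j
      rcases hx : finSumFinEquiv.symm j with i | i
      · exact hAsInd i
      · exact hBsInd i

/-- Two direct sum decompositions with the same split mono have isomorphic complements. -/
lemma compl_iso_same_incl {U A B B' : C} (i : A ⟶ U)
    (p : U ⟶ A) (j : B ⟶ U) (q : U ⟶ B) (p' : U ⟶ A) (j' : B' ⟶ U) (q' : U ⟶ B')
    (hjq : j ≫ q = 𝟙 B) (hj'q' : j' ≫ q' = 𝟙 B') (hiq : i ≫ q = 0) (hiq' : i ≫ q' = 0)
    (hsum : p ≫ i + q ≫ j = 𝟙 U) (hsum' : p' ≫ i + q' ≫ j' = 𝟙 U) :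
    Nonempty (B ≅ B') := by
  refine ⟨⟨j ≫ q', j' ≫ q, ?_, ?_⟩⟩
  · have hqj : q' ≫ j' = 𝟙 U - p' ≫ i := by rw [← hsum']; abel
    calc (j ≫ q') ≫ j' ≫ q = j ≫ (q' ≫ j') ≫ q := by simp [Category.assoc]
    _ = j ≫ (𝟙 U - p' ≫ i) ≫ q := by rw [hqj]
    _ = j ≫ q - j ≫ p' ≫ i ≫ q := by
        simp [Preadditive.sub_comp, Preadditive.comp_sub, Category.assoc]
    _ = 𝟙 B := by rw [hjq, hiq, comp_zero, comp_zero, sub_zero]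
  · have hqj : q ≫ j = 𝟙 U - p ≫ i := by rw [← hsum]; abel
    calc (j' ≫ q) ≫ j ≫ q' = j' ≫ (q ≫ j) ≫ q' := by simp [Category.assoc]
    _ = j' ≫ (𝟙 U - p ≫ i) ≫ q' := by rw [hqj]
    _ = j' ≫ q' - j' ≫ p ≫ i ≫ q' := by
        simp [Preadditive.sub_comp, Preadditive.comp_sub, Category.assoc]
    _ = 𝟙 B' := by rw [hj'q', hiq', comp_zero, comp_zero, sub_zero]

/-- Replacing the inclusion of a direct summand by another split mono whose composite
with the projection is invertible. -/
lemma replace_incl {U A A₁ B : C} (i : A ⟶ U) (p : U ⟶ A) (j : B ⟶ U) (q : U ⟶ B)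
    (i₁ : A₁ ⟶ U) (a' : A ⟶ A₁)
    (ha1 : (i₁ ≫ p) ≫ a' = 𝟙 A₁) (ha2 : a' ≫ i₁ ≫ p = 𝟙 A)
    (hjp : j ≫ p = 0) (hjq : j ≫ q = 𝟙 B) (hsum : p ≫ i + q ≫ j = 𝟙 U) :
    ∃ (p₁ : U ⟶ A₁) (q₁ : U ⟶ B),
      i₁ ≫ p₁ = 𝟙 A₁ ∧ j ≫ p₁ = 0 ∧ i₁ ≫ q₁ = 0 ∧ j ≫ q₁ = 𝟙 B ∧
        p₁ ≫ i₁ + q₁ ≫ j = 𝟙 U := by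
  set p₁ : U ⟶ A₁ := p ≫ a' with hp₁
  set q₁ : U ⟶ B := q - p₁ ≫ i₁ ≫ q with hq₁
  have hip : i₁ ≫ p₁ = 𝟙 A₁ := by rw [hp₁, ← Category.assoc, ha1]
  have hzero : j ≫ p₁ = 0 := by rw [hp₁, ← Category.assoc, hjp, zero_comp]
  refine ⟨p₁, q₁, hip, hzero, ?_, ?_, ?_⟩
  · rw [hq₁, Preadditive.comp_sub]
    have h8 : i₁ ≫ p₁ ≫ i₁ ≫ q = i₁ ≫ q := by rw [← Category.assoc, hip, Category.id_comp]
    rw [h8, sub_self]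
  · rw [hq₁, Preadditive.comp_sub, hjq, ← Category.assoc, hzero, zero_comp, sub_zero]
  · have hqj : q ≫ j = 𝟙 U - p ≫ i := by rw [← hsum]; abel
    have hpa : p₁ ≫ i₁ ≫ p = p := by
      rw [hp₁, Category.assoc, ha2, Category.comp_id]
    calc p₁ ≫ i₁ + q₁ ≫ j
        = p₁ ≫ i₁ + q ≫ j - p₁ ≫ (i₁ ≫ (q ≫ j)) := by
          rw [hq₁, Preadditive.sub_comp]
          simp only [Category.assoc]
          abel
    _ = p₁ ≫ i₁ + (𝟙 U - p ≫ i) - p₁ ≫ (i₁ ≫ (𝟙 U - p ≫ i)) := by rw [hqj]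
    _ = 𝟙 U - p ≫ i + p₁ ≫ (i₁ ≫ p) ≫ i := by
        simp only [Preadditive.comp_sub, Category.comp_id, Preadditive.sub_comp,
          Category.assoc]
        abel
    _ = 𝟙 U := by rw [← Category.assoc, ← Category.assoc, Category.assoc p₁ i₁ p, hpa]; abel

/-- Peeling one summand off a direct sum decomposition. -/
lemma binary_data {n : ℕ} {U W : C} {Zs : Fin (n + 1) → C}
    (ι : ∀ j, Zs j ⟶ U) (π : ∀ j, U ⟶ Zs j)
    (hii : ∀ j, ι j ≫ π j = 𝟙 (Zs j)) (hij : ∀ j j', j ≠ j' → ι j ≫ π j' = 0)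
    (hsum : (∑ j, π j ≫ ι j) = 𝟙 U) (j₀ : Fin (n + 1))
    (ιW : ∀ l : Fin n, Zs (j₀.succAbove l) ⟶ W) (πW : ∀ l, W ⟶ Zs (j₀.succAbove l))
    (hiiW : ∀ l, ιW l ≫ πW l = 𝟙 _) (hijW : ∀ l l', l ≠ l' → ιW l ≫ πW l' = 0)
    (hsumW : (∑ l, πW l ≫ ιW l) = 𝟙 W) :
    ∃ (jW : W ⟶ U) (qW : U ⟶ W),
      jW ≫ qW = 𝟙 W ∧ ι j₀ ≫ qW = 0 ∧ jW ≫ π j₀ = 0 ∧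
        π j₀ ≫ ι j₀ + qW ≫ jW = 𝟙 U := by
  set jW : W ⟶ U := ∑ l, πW l ≫ ι (j₀.succAbove l) with hjW
  set qW : U ⟶ W := ∑ l, π (j₀.succAbove l) ≫ ιW l with hqW
  have hinj : ∀ l l' : Fin n, l ≠ l' → j₀.succAbove l ≠ j₀.succAbove l' :=
    fun l l' h hc => h (Fin.succAbove_right_injective hc)
  refine ⟨jW, qW, ?_, ?_, ?_, ?_⟩
  · rw [hjW, hqW,
      sum_comp_sum πW (fun l => ι (j₀.succAbove l)) (fun l => π (j₀.succAbove l)) ιW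
        (fun l => hii _) (fun l l' h => hij _ _ (hinj l l' h)), hsumW]
  · rw [hqW, Preadditive.comp_sum]
    have : ∀ l : Fin n, ι j₀ ≫ π (j₀.succAbove l) ≫ ιW l = 0 := by
      intro l
      rw [← Category.assoc, hij _ _ (Fin.succAbove_ne j₀ l).symm, zero_comp]
    rw [Finset.sum_congr rfl fun l _ => this l, Finset.sum_const_zero]
  · rw [hjW, Preadditive.sum_comp]
    have : ∀ l : Fin n, (πW l ≫ ι (j₀.succAbove l)) ≫ π j₀ = 0 := by
      intro l
      rw [Category.assoc, hij _ _ (Fin.succAbove_ne j₀ l), comp_zero]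
    rw [Finset.sum_congr rfl fun l _ => this l, Finset.sum_const_zero]
  · rw [hqW, hjW,
      sum_comp_sum (fun l => π (j₀.succAbove l)) ιW πW (fun l => ι (j₀.succAbove l))
        hiiW hijW]
    rw [← hsum, Fin.sum_univ_succAbove (fun j => π j ≫ ι j) j₀]

/-- A split mono into an object with local endomorphism ring, whose source is
non-zero, is an isomorphism. -/
lemma two_sided_inverse_of_section {Y Z : C} (hLZ : IsLocalRing (End Z)) (hy : ¬ IsZero Y)
    (a : Y ⟶ Z) (b : Z ⟶ Y) (hab : a ≫ b = 𝟙 Y) :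
    ∃ a' : Z ⟶ Y, a ≫ a' = 𝟙 Y ∧ a' ≫ a = 𝟙 Z := by
  let e : End Z := b ≫ a
  have he : e * e = e := by
    show (b ≫ a) ≫ (b ≫ a) = b ≫ a
    calc (b ≫ a) ≫ b ≫ a = b ≫ (a ≫ b) ≫ a := by simp [Category.assoc]
    _ = b ≫ a := by rw [hab, Category.id_comp]
  rcases LRidem he with h0 | h1
  · exfalso
    apply hy
    rw [IsZero.iff_id_eq_zero, ← hab]
    have h2 : b ≫ a = (0 : Z ⟶ Z) := h0
    calc a ≫ b = (a ≫ b) ≫ a ≫ b := by rw [hab, Category.id_comp]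
    _ = a ≫ (b ≫ a) ≫ b := by simp [Category.assoc]
    _ = 0 := by rw [h2, zero_comp, comp_zero]
  · have h3 : b ≫ a = 𝟙 Z := h1
    exact ⟨b, hab, h3⟩

end Exchange

section ThmM
set_option linter.unusedSectionVars false

variable {k : Type u} [Field k]
variable {C : Type u} [Category.{v} C] [Preadditive C] [Linear k C]
  [HasZeroObject C] [HasShift C ℤ] [∀ n : ℤ, (shiftFunctor C n).Additive]
  [Pretriangulated C]

/-- Uniqueness of decompositions into indecomposables (Krull-Schmidt). -/
lemma thmM (hKS : KrullSchmidt C) :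
    ∀ (n : ℕ) {m : ℕ} (U : C) (Ys : Fin n → C) (Zs : Fin m → C),
      (∀ i, Indec (Ys i)) → (∀ j, Indec (Zs j)) →
      IsDirectSumDecomp U Ys → IsDirectSumDecomp U Zs →
      ∃ σ : Fin n ≃ Fin m, ∀ i, Nonempty (Ys i ≅ Zs (σ i)) := by
  intro n
  induction n with
  | zero =>
    intro m U Ys Zs hY hZ h1 h2
    have hU : IsZero U := isZero_of_dsd_empty h1
    cases m with
    | zero => exact ⟨Equiv.refl _, fun i => i.elim0⟩
    | succ m =>
      exfalso
      obtain ⟨ι', π', hii', hij', hsum'⟩ := h2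
      apply (hZ 0).1
      rw [IsZero.iff_id_eq_zero, ← hii' 0]
      have hid : 𝟙 U = 0 := (IsZero.iff_id_eq_zero U).1 hU
      calc ι' 0 ≫ π' 0 = ι' 0 ≫ 𝟙 U ≫ π' 0 := by rw [Category.id_comp]
      _ = 0 := by rw [hid, zero_comp, comp_zero]
  | succ n ih =>
    intro m U Ys Zs hY hZ h1 h2
    obtain ⟨ι, π, hii, hij, hsum⟩ := h1
    obtain ⟨ι', π', hii', hij', hsum'⟩ := h2
    haveI hL0 : IsLocalRing (End (Ys 0)) := hKS _ (hY 0)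
    -- expand the identity of `Ys 0` through the second decomposition
    have hsum0 : (∑ j, ι 0 ≫ π' j ≫ ι' j ≫ π 0) = 𝟙 (Ys 0) := by
      calc ∑ j, ι 0 ≫ π' j ≫ ι' j ≫ π 0
          = ι 0 ≫ (∑ j, π' j ≫ ι' j) ≫ π 0 := by
            rw [Preadditive.sum_comp, Preadditive.comp_sum]
            exact Finset.sum_congr rfl fun j _ => by simp [Category.assoc]
      _ = 𝟙 (Ys 0) := by rw [hsum', Category.id_comp, hii]
    let t : Fin m → End (Ys 0) := fun j => ι 0 ≫ π' j ≫ ι' j ≫ π 0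
    have hUnit : IsUnit (∑ j, t j) := by
      have h9 : (∑ j, t j) = (1 : End (Ys 0)) := hsum0
      rw [h9]; exact isUnit_one
    obtain ⟨j₀, hj₀⟩ := LRexists_unit_of_sum hUnit
    cases m with
    | zero => exact j₀.elim0
    | succ m =>
    haveI hLZ : IsLocalRing (End (Zs j₀)) := hKS _ (hZ j₀)
    obtain ⟨c, hc1, hc2⟩ := isUnit_iff_exists.1 hj₀
    -- hc2 : c * t = 1, i.e. t ≫ c = 𝟙 in composition order
    have htc : (ι 0 ≫ π' j₀ ≫ ι' j₀ ≫ π 0) ≫ c = 𝟙 (Ys 0) := hc2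
    have hab : (ι 0 ≫ π' j₀) ≫ (ι' j₀ ≫ π 0) ≫ c = 𝟙 (Ys 0) := by
      rw [← htc]; simp [Category.assoc]
    obtain ⟨a', ha1, ha2⟩ :=
      two_sided_inverse_of_section hLZ (hY 0).1 (ι 0 ≫ π' j₀) ((ι' j₀ ≫ π 0) ≫ c) hab
    -- complements
    obtain ⟨V, hV⟩ := dsd_exists_obj (fun l : Fin n => Ys ((0 : Fin (n+1)).succAbove l))
    obtain ⟨W, hW⟩ := dsd_exists_obj (fun l : Fin m => Zs (j₀.succAbove l))
    have hV' := hV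
    obtain ⟨ιV, πV, hiiV, hijV, hsumV⟩ := hV
    obtain ⟨ιW, πW, hiiW, hijW, hsumW⟩ := hW
    obtain ⟨jV, qV, hjqV, hiqV, hjpV, hsumUV⟩ :=
      binary_data ι π hii hij hsum 0 ιV πV hiiV hijV hsumV
    obtain ⟨jW, qW, hjqW, hiqW, hjpW, hsumUW⟩ :=
      binary_data ι' π' hii' hij' hsum' j₀ ιW πW hiiW hijW hsumW
    -- replace the inclusion of `Zs j₀` by `ι 0`
    obtain ⟨p₁, q₁, hip1, hjp1, hiq1, hjq1, hsum1⟩ :=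
      replace_incl (ι' j₀) (π' j₀) jW qW (ι 0) a' ha1 ha2 hjpW hjqW hsumUW
    -- two decompositions of U with the same inclusion ι 0 : complements V and W isomorphic
    have hVW : Nonempty (V ≅ W) :=
      compl_iso_same_incl (ι 0) (π 0) jV qV p₁ jW q₁
        hjqV hjq1 hiqV hiq1 hsumUV hsum1
    -- transport and use the induction hypothesis
    have hWasY : IsDirectSumDecomp W (fun l : Fin n => Ys ((0 : Fin (n+1)).succAbove l)) :=
      hV'.of_iso hVW.some
    have hWasZ : IsDirectSumDecomp W (fun l : Fin m => Zs (j₀.succAbove l)) :=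
      ⟨ιW, πW, hiiW, hijW, hsumW⟩
    obtain ⟨σ', hσ'⟩ := ih W (fun l => Ys ((0 : Fin (n+1)).succAbove l))
      (fun l => Zs (j₀.succAbove l)) (fun l => hY _) (fun l => hZ _) hWasY hWasZ
    refine ⟨(finSuccEquiv' (0 : Fin (n+1))).trans
      ((Equiv.optionCongr σ').trans (finSuccEquiv' j₀).symm), ?_⟩
    intro i
    induction i using Fin.cases with
    | zero =>
      have hσ0 : ((finSuccEquiv' (0 : Fin (n+1))).trans
          ((Equiv.optionCongr σ').trans (finSuccEquiv' j₀).symm)) 0 = j₀ := by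
        simp [finSuccEquiv'_at, finSuccEquiv'_symm_none]
      rw [hσ0]
      exact ⟨⟨ι 0 ≫ π' j₀, a', ha1, ha2⟩⟩
    | succ l =>
      have hstep : (finSuccEquiv' (0 : Fin (n+1))) l.succ = some l := by
        rw [← Fin.zero_succAbove]
        exact finSuccEquiv'_succAbove _ _
      have hσs : ((finSuccEquiv' (0 : Fin (n+1))).trans
          ((Equiv.optionCongr σ').trans (finSuccEquiv' j₀).symm)) l.succ
          = j₀.succAbove (σ' l) := by
        simp [Equiv.trans_apply, hstep, finSuccEquiv'_symm_some]
      rw [hσs]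
      have := hσ' l
      rwa [Fin.zero_succAbove] at this

end ThmM

section SerreCY
set_option linter.unusedSectionVars false

variable {k : Type u} [Field k]
variable {C : Type u} [Category.{v} C] [Preadditive C] [Linear k C]
  [HasZeroObject C] [HasShift C ℤ] [∀ n : ℤ, (shiftFunctor C n).Additive]
  [Pretriangulated C]

open Module

/-- A CY object admits an isomorphism `F X ≅ X⟦d⟧`. -/
lemma cy_iso_of_cy [∀ X Y : C, FiniteDimensional k (X ⟶ Y)] (S : Serre k C) (d : ℤ) (X : C)
    (hX : IsCYObj k C d X) : Nonempty (S.F.obj X ≅ X⟦d⟧) := by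
  obtain ⟨hXnz, η, hnat⟩ := hX
  -- transposed pairings
  let Tcy : ∀ Z : C, (Z ⟶ X⟦d⟧) →ₗ[k] Module.Dual k (X ⟶ Z) :=
    fun Z => (η Z).toLinearMap.flip
  let Tser : ∀ Z : C, (Z ⟶ S.F.obj X) →ₗ[k] Module.Dual k (X ⟶ Z) :=
    fun Z => (S.η X Z).toLinearMap.flip
  have hTcy_inj : ∀ Z, Function.Injective (Tcy Z) := by
    intro Z
    rw [injective_iff_map_eq_zero]
    intro v hv
    rw [← Module.forall_dual_apply_eq_zero_iff k v]
    intro ψ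
    have h1 : η Z ((η Z).symm ψ) v = 0 := by
      have := congrFun (congrArg (fun (L : Module.Dual k (X ⟶ Z)) => (L : (X ⟶ Z) → k)) hv)
        ((η Z).symm ψ)
      simpa [Tcy] using this
    rwa [LinearEquiv.apply_symm_apply] at h1
  have hTser_inj : ∀ Z, Function.Injective (Tser Z) := by
    intro Z
    rw [injective_iff_map_eq_zero]
    intro v hv
    rw [← Module.forall_dual_apply_eq_zero_iff k v]
    intro ψ
    have h1 : S.η X Z ((S.η X Z).symm ψ) v = 0 := by
      have := congrFun (congrArg (fun (L : Module.Dual k (X ⟶ Z)) => (L : (X ⟶ Z) → k)) hv)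
        ((S.η X Z).symm ψ)
      simpa [Tser] using this
    rwa [LinearEquiv.apply_symm_apply] at h1
  have hdimcy : ∀ Z : C, finrank k (Z ⟶ X⟦d⟧) = finrank k (Module.Dual k (X ⟶ Z)) := by
    intro Z
    rw [Subspace.dual_finrank_eq, (η Z).finrank_eq, Subspace.dual_finrank_eq]
  have hdimser : ∀ Z : C, finrank k (Z ⟶ S.F.obj X) = finrank k (Module.Dual k (X ⟶ Z)) := by
    intro Z
    rw [Subspace.dual_finrank_eq, (S.η X Z).finrank_eq, Subspace.dual_finrank_eq]
  let eCY : ∀ Z : C, (Z ⟶ X⟦d⟧) ≃ₗ[k] Module.Dual k (X ⟶ Z) :=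
    fun Z => (Tcy Z).linearEquivOfInjective (hTcy_inj Z) (hdimcy Z)
  let eSer : ∀ Z : C, (Z ⟶ S.F.obj X) ≃ₗ[k] Module.Dual k (X ⟶ Z) :=
    fun Z => (Tser Z).linearEquivOfInjective (hTser_inj Z) (hdimser Z)
  let e : ∀ Z : C, (Z ⟶ S.F.obj X) ≃ₗ[k] (Z ⟶ X⟦d⟧) :=
    fun Z => (eSer Z).trans (eCY Z).symm
  -- the pairing characterisation of `e`
  have hpair : ∀ (Z : C) (w : Z ⟶ S.F.obj X) (u : X ⟶ Z),
      η Z u (e Z w) = S.η X Z u w := by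
    intro Z w u
    have h1 : eCY Z (e Z w) = eSer Z w := by
      simp only [e, LinearEquiv.trans_apply, LinearEquiv.apply_symm_apply]
    have h2 : Tcy Z (e Z w) = Tser Z w := by
      rwa [LinearMap.linearEquivOfInjective_apply, LinearMap.linearEquivOfInjective_apply] at h1
    have := congrFun (congrArg (fun (L : Module.Dual k (X ⟶ Z)) => (L : (X ⟶ Z) → k)) h2) u
    simpa [Tcy, Tser] using this
  have huniq : ∀ (Z : C) (v v' : Z ⟶ X⟦d⟧), (∀ u : X ⟶ Z, η Z u v = η Z u v') → v = v' := by
    intro Z v v' h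
    apply hTcy_inj Z
    ext u
    exact h u
  have hnat' : ∀ {Z W : C} (f : Z ⟶ W) (w : W ⟶ S.F.obj X),
      e Z (f ≫ w) = f ≫ e W w := by
    intro Z W f w
    apply huniq
    intro u
    rw [hpair]
    have h3 : S.η X Z u (f ≫ w) = S.η X W (u ≫ f) w := (S.nat_right f u w).symm
    have h4 : η Z u (f ≫ e W w) = η W (u ≫ f) (e W w) := (hnat f u (e W w)).symm
    rw [h3, h4, hpair]
  set φ : S.F.obj X ⟶ X⟦d⟧ := e (S.F.obj X) (𝟙 _) with hφ
  set ψ : X⟦d⟧ ⟶ S.F.obj X := (e (X⟦d⟧)).symm (𝟙 _) with hψ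
  have echar : ∀ (Z : C) (w : Z ⟶ S.F.obj X), e Z w = w ≫ φ := by
    intro Z w
    have := hnat' w (𝟙 (S.F.obj X))
    rwa [Category.comp_id] at this
  have hψφ : ψ ≫ φ = 𝟙 (X⟦d⟧) := by
    rw [← echar (X⟦d⟧) ψ, hψ, LinearEquiv.apply_symm_apply]
  have hφψ : φ ≫ ψ = 𝟙 (S.F.obj X) := by
    have h5 : e (S.F.obj X) (φ ≫ ψ) = e (S.F.obj X) (𝟙 _) := by
      rw [echar, ← hφ, Category.assoc, hψφ, Category.comp_id]
    exact (e (S.F.obj X)).injective h5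
  exact ⟨⟨φ, ψ, hφψ, hψφ⟩⟩

/-- Conversely, an isomorphism `F X ≅ X⟦d⟧` makes a non-zero `X` a CY object. -/
lemma cy_of_iso (S : Serre k C) (d : ℤ) (X : C) (hnz : ¬ IsZero X)
    (φ : S.F.obj X ≅ X⟦d⟧) : IsCYObj k C d X := by
  refine ⟨hnz, ?_⟩
  let cmp : ∀ Z : C, (Z ⟶ X⟦d⟧) ≃ₗ[k] (Z ⟶ S.F.obj X) := fun Z =>
    LinearEquiv.ofLinear (Linear.rightComp k Z φ.inv) (Linear.rightComp k Z φ.hom)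
      (by ext v; simp) (by ext v; simp)
  refine ⟨fun Z => (S.η X Z).trans (cmp Z).dualMap, ?_⟩
  intro Z W f u w
  have h1 : ∀ (Z : C) (u : X ⟶ Z) (w : Z ⟶ X⟦d⟧),
      ((S.η X Z).trans (cmp Z).dualMap) u w = S.η X Z u (w ≫ φ.inv) := by
    intro Z u w
    rfl
  rw [h1, h1]
  rw [S.nat_right f u (w ≫ φ.inv), Category.assoc]

/-- Equivalences preserve indecomposability. -/
lemma Indec.map {Y : C} (F : C ⥤ C) (hadd : F.Additive) [F.Full] [F.Faithful] [F.EssSurj]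
    (h : Indec Y) : Indec (F.obj Y) := by
  haveI := hadd
  constructor
  · intro hz
    apply h.1
    rw [IsZero.iff_id_eq_zero]
    apply F.map_injective
    rw [F.map_id, F.map_zero]
    exact (IsZero.iff_id_eq_zero _).1 hz
  · intro A B hdec
    obtain ⟨iA, iB, pA, pB, h1, h2, h3, h4, h5⟩ := hdec
    set A₀ := F.objPreimage A with hA₀
    set B₀ := F.objPreimage B with hB₀
    set eA : F.obj A₀ ≅ A := F.objObjPreimageIso A
    set eB : F.obj B₀ ≅ B := F.objObjPreimageIso B
    have hdec₀ : IsDecomp Y A₀ B₀ := by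
      refine ⟨F.preimage (eA.hom ≫ iA), F.preimage (eB.hom ≫ iB),
        F.preimage (pA ≫ eA.inv), F.preimage (pB ≫ eB.inv), ?_, ?_, ?_, ?_, ?_⟩
      · apply F.map_injective
        rw [F.map_comp, F.map_preimage, F.map_preimage, F.map_id]
        calc (eA.hom ≫ iA) ≫ pA ≫ eA.inv = eA.hom ≫ (iA ≫ pA) ≫ eA.inv := by
              simp [Category.assoc]
        _ = 𝟙 (F.obj A₀) := by rw [h1, Category.id_comp, eA.hom_inv_id]
      · apply F.map_injective
        rw [F.map_comp, F.map_preimage, F.map_preimage, F.map_id]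
        calc (eB.hom ≫ iB) ≫ pB ≫ eB.inv = eB.hom ≫ (iB ≫ pB) ≫ eB.inv := by
              simp [Category.assoc]
        _ = 𝟙 (F.obj B₀) := by rw [h2, Category.id_comp, eB.hom_inv_id]
      · apply F.map_injective
        rw [F.map_comp, F.map_preimage, F.map_preimage, F.map_zero]
        calc (eA.hom ≫ iA) ≫ pB ≫ eB.inv = eA.hom ≫ (iA ≫ pB) ≫ eB.inv := by
              simp [Category.assoc]
        _ = 0 := by rw [h3, zero_comp, comp_zero]
      · apply F.map_injective
        rw [F.map_comp, F.map_preimage, F.map_preimage, F.map_zero]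
        calc (eB.hom ≫ iB) ≫ pA ≫ eA.inv = eB.hom ≫ (iB ≫ pA) ≫ eA.inv := by
              simp [Category.assoc]
        _ = 0 := by rw [h4, zero_comp, comp_zero]
      · apply F.map_injective
        rw [F.map_add, F.map_comp, F.map_comp, F.map_preimage, F.map_preimage,
          F.map_preimage, F.map_preimage, F.map_id]
        calc (pA ≫ eA.inv) ≫ eA.hom ≫ iA + (pB ≫ eB.inv) ≫ eB.hom ≫ iB
            = pA ≫ iA + pB ≫ iB := by
              rw [Category.assoc, Category.assoc, eA.inv_hom_id_assoc, eB.inv_hom_id_assoc]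
        _ = 𝟙 (F.obj Y) := h5
    have hz₀ := h.2 A₀ B₀ hdec₀
    have hFz : ∀ (T₀ : C) (T : C) (eT : F.obj T₀ ≅ T), IsZero T₀ → IsZero T := by
      intro T₀ T eT hz
      have : IsZero (F.obj T₀) := by
        rw [IsZero.iff_id_eq_zero, ← F.map_id, (IsZero.iff_id_eq_zero T₀).1 hz, F.map_zero]
      exact this.of_iso eT.symm
    rcases hz₀ with hz | hz
    · exact Or.inl (hFz A₀ A eA hz)
    · exact Or.inr (hFz B₀ B eB hz)

end SerreCY

section Counting

/-- Families with equal associated multisets are related by a permutation. -/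
lemma perm_of_count {α : Type*} : ∀ {n : ℕ} (f g : Fin n → α),
    (∑ i, ({f i} : Multiset α)) = ∑ i, {g i} →
    ∃ σ : Fin n ≃ Fin n, ∀ i, f i = g (σ i) := by
  intro n
  induction n with
  | zero => intro f g h; exact ⟨Equiv.refl _, fun i => i.elim0⟩
  | succ n ih =>
    intro f g h
    have hmem : f 0 ∈ (∑ i, ({g i} : Multiset α)) := by
      rw [← h, Multiset.mem_sum]
      exact ⟨0, Finset.mem_univ _, Multiset.mem_singleton.2 rfl⟩
    rw [Multiset.mem_sum] at hmem
    obtain ⟨j₀, -, hj₀⟩ := hmem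
    rw [Multiset.mem_singleton] at hj₀
    rw [Fin.sum_univ_succ (fun i => ({f i} : Multiset α)),
      Fin.sum_univ_succAbove (fun i => ({g i} : Multiset α)) j₀, hj₀] at h
    have h' := add_left_cancel h
    obtain ⟨σ', hσ'⟩ := ih (fun i => f i.succ) (fun l => g (j₀.succAbove l)) h'
    refine ⟨(finSuccEquiv' (0 : Fin (n+1))).trans
      ((Equiv.optionCongr σ').trans (finSuccEquiv' j₀).symm), ?_⟩
    intro i
    induction i using Fin.cases with
    | zero =>
      have hσ0 : ((finSuccEquiv' (0 : Fin (n+1))).trans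
          ((Equiv.optionCongr σ').trans (finSuccEquiv' j₀).symm)) 0 = j₀ := by
        simp [finSuccEquiv'_at, finSuccEquiv'_symm_none]
      rw [hσ0]; exact hj₀
    | succ l =>
      have hstep : (finSuccEquiv' (0 : Fin (n+1))) l.succ = some l := by
        rw [← Fin.zero_succAbove]
        exact finSuccEquiv'_succAbove _ _
      have hσs : ((finSuccEquiv' (0 : Fin (n+1))).trans
          ((Equiv.optionCongr σ').trans (finSuccEquiv' j₀).symm)) l.succ
          = j₀.succAbove (σ' l) := by
        simp [Equiv.trans_apply, hstep, finSuccEquiv'_symm_some]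
      rw [hσs]
      exact hσ' l

end Counting

section Complement
set_option linter.unusedSectionVars false

variable {k : Type u} [Field k]
variable {C : Type u} [Category.{v} C] [Preadditive C] [Linear k C]
  [HasZeroObject C] [HasShift C ℤ] [∀ n : ℤ, (shiftFunctor C n).Additive]
  [Pretriangulated C]

open Module

/-- The complement of a CY direct summand of a CY object is CY. -/
lemma cy_complement [∀ X Y : C, FiniteDimensional k (X ⟶ Y)] (hKS : KrullSchmidt C)
    (S : Serre k C) {d : ℤ} {X A B : C} (hX : IsCYObj k C d X) (hdec : IsDecomp X A B)
    (hA : IsCYObj k C d A) (hB : ¬ IsZero B) : IsCYObj k C d B := by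
  classical
  haveI := S.isEquiv
  haveI := S.additive
  obtain ⟨φX⟩ := cy_iso_of_cy S d X hX
  obtain ⟨φA⟩ := cy_iso_of_cy S d A hA
  obtain ⟨r, hr, As, hAsInd, hAsD⟩ := exists_indec_dsd (k := k) _ A le_rfl hA.1
  obtain ⟨s, hs, Bs, hBsInd, hBsD⟩ := exists_indec_dsd (k := k) _ B le_rfl hB
  have hXD := dsd_concat hdec hAsD hBsD
  have hfamInd : ∀ j : Fin (r + s), Indec (Sum.elim As Bs (finSumFinEquiv.symm j)) := by
    intro j
    rcases hx : finSumFinEquiv.symm j with i | i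
    · exact hAsInd i
    · exact hBsInd i
  have hshAdd : (shiftFunctor C d).Additive := inferInstance
  have h1 : IsDirectSumDecomp (X⟦d⟧)
      (fun j => S.F.obj (Sum.elim As Bs (finSumFinEquiv.symm j))) :=
    (hXD.map S.F S.additive).of_iso φX
  have h2 : IsDirectSumDecomp (X⟦d⟧)
      (fun j => (Sum.elim As Bs (finSumFinEquiv.symm j))⟦d⟧) :=
    hXD.map (shiftFunctor C d) hshAdd
  obtain ⟨σ, hσ⟩ := thmM hKS (r + s) (X⟦d⟧) _ _
    (fun j => Indec.map S.F S.additive (hfamInd j))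
    (fun j => Indec.map (shiftFunctor C d) hshAdd (hfamInd j)) h1 h2
  have hA1 : IsDirectSumDecomp (A⟦d⟧) (fun i => S.F.obj (As i)) :=
    (hAsD.map S.F S.additive).of_iso φA
  have hA2 : IsDirectSumDecomp (A⟦d⟧) (fun i => (As i)⟦d⟧) :=
    hAsD.map (shiftFunctor C d) hshAdd
  obtain ⟨τ, hτ⟩ := thmM hKS r (A⟦d⟧) _ _
    (fun i => Indec.map S.F S.additive (hAsInd i))
    (fun i => Indec.map (shiftFunctor C d) hshAdd (hAsInd i)) hA1 hA2
  -- pass to multisets of isomorphism classes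
  let q : C → Quotient (isIsomorphicSetoid C) := fun Y => Quotient.mk _ Y
  have hq : ∀ {Y Z : C}, Nonempty (Y ≅ Z) → q Y = q Z := fun h => Quotient.sound h
  have hsplit : ∀ (h : C → C),
      (∑ j : Fin (r + s), ({q (h (Sum.elim As Bs (finSumFinEquiv.symm j)))} : Multiset _))
        = (∑ i : Fin r, {q (h (As i))}) + ∑ i : Fin s, {q (h (Bs i))} := by
    intro h
    rw [Equiv.sum_comp finSumFinEquiv.symm
      (fun x => ({q (h (Sum.elim As Bs x))} : Multiset _)), Fintype.sum_sum_type]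
    rfl
  have hms : (∑ j : Fin (r + s),
      ({q (S.F.obj (Sum.elim As Bs (finSumFinEquiv.symm j)))} : Multiset _))
      = ∑ j : Fin (r + s), {q ((Sum.elim As Bs (finSumFinEquiv.symm j))⟦d⟧)} := by
    calc ∑ j : Fin (r + s), ({q (S.F.obj (Sum.elim As Bs (finSumFinEquiv.symm j)))} : Multiset _)
        = ∑ j : Fin (r + s), {q ((Sum.elim As Bs (finSumFinEquiv.symm (σ j)))⟦d⟧)} :=
          Finset.sum_congr rfl fun j _ => by rw [hq (hσ j)]
    _ = ∑ j : Fin (r + s), {q ((Sum.elim As Bs (finSumFinEquiv.symm j))⟦d⟧)} :=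
          Equiv.sum_comp σ (fun j => ({q ((Sum.elim As Bs (finSumFinEquiv.symm j))⟦d⟧)} : Multiset _))
  have hmsA : (∑ i : Fin r, ({q (S.F.obj (As i))} : Multiset _))
      = ∑ i : Fin r, {q ((As i)⟦d⟧)} := by
    calc ∑ i : Fin r, ({q (S.F.obj (As i))} : Multiset _)
        = ∑ i : Fin r, {q ((As (τ i))⟦d⟧)} :=
          Finset.sum_congr rfl fun i _ => by rw [hq (hτ i)]
    _ = ∑ i : Fin r, {q ((As i)⟦d⟧)} := Equiv.sum_comp τ (fun i => ({q ((As i)⟦d⟧)} : Multiset _))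
  have hmsB : (∑ i : Fin s, ({q (S.F.obj (Bs i))} : Multiset _))
      = ∑ i : Fin s, {q ((Bs i)⟦d⟧)} := by
    have hbig := hms
    rw [hsplit (fun Y => S.F.obj Y), hsplit (fun Y => Y⟦d⟧), hmsA] at hbig
    exact add_left_cancel hbig
  obtain ⟨ρ, hρ⟩ := perm_of_count (fun i => q (S.F.obj (Bs i))) (fun i => q ((Bs i)⟦d⟧)) hmsB
  have hisos : ∀ i : Fin s, Nonempty (S.F.obj (Bs i) ≅ (Bs (ρ i))⟦d⟧) :=
    fun i => Quotient.exact (hρ i)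
  have hFB : IsDirectSumDecomp (S.F.obj B) (fun i => S.F.obj (Bs i)) :=
    hBsD.map S.F S.additive
  have hSB : IsDirectSumDecomp (B⟦d⟧) (fun i => (Bs i)⟦d⟧) :=
    hBsD.map (shiftFunctor C d) hshAdd
  obtain ⟨φB⟩ := dsd_iso_of_matched hFB hSB ρ hisos
  exact cy_of_iso S d B hB φB

end Complement
end CYPaper

open CategoryTheory CategoryTheory.Limits CategoryTheory.Pretriangulated CYPaper

/-- **Statement 8** (Theorem 4.2 (i)). Let `𝒜` be a Hom-finite Krull-Schmidt
triangulated `k`-category with Serre functor `F`. Then every `d`-th Calabi-Yau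
object is a direct sum of finitely many minimal `d`-th Calabi-Yau objects. -/
theorem stmt_8 (k : Type u) [Field k] (C : Type u) [Category.{v} C] [Preadditive C]
    [Linear k C] [HasZeroObject C] [HasShift C ℤ]
    [∀ n : ℤ, (shiftFunctor C n).Additive] [Pretriangulated C]
    [∀ X Y : C, FiniteDimensional k (X ⟶ Y)]
    (hKS : KrullSchmidt C) (S : Serre k C)
    (d : ℤ) (X : C) (hX : IsCYObj k C d X) :
    ∃ (r : ℕ) (_ : 0 < r) (Xs : Fin r → C),
      IsDirectSumDecomp X Xs ∧ ∀ j, IsMinCYObj k d (Xs j) := by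
  classical
  suffices h : ∀ (N : ℕ) (Y : C), Module.finrank k (Y ⟶ Y) ≤ N → IsCYObj k C d Y →
      ∃ (r : ℕ) (_ : 0 < r) (Xs : Fin r → C),
        IsDirectSumDecomp Y Xs ∧ ∀ j, IsMinCYObj k d (Xs j) by
    exact h _ X le_rfl hX
  intro N
  induction N with
  | zero =>
    intro Y hle hcy
    exact absurd hle (by have := finrank_pos_of_not_isZero (k := k) hcy.1; omega)
  | succ N ih =>
    intro Y hle hcy
    by_cases hmin : IsMinCYObj k d Y
    · exact ⟨1, Nat.one_pos, fun _ => Y, dsd_single Y, fun _ => hmin⟩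
    · have hstep : ∃ A B : C, IsDecomp Y A B ∧ ¬ IsZero B ∧ IsCYObj k C d A := by
        rw [IsMinCYObj, not_and_or] at hmin
        rcases hmin with h | h
        · exact absurd hcy h
        · push_neg at h
          obtain ⟨A, B, h1, h2, h3⟩ := h
          exact ⟨A, B, h1, h2, h3⟩
      obtain ⟨A, B, hdec, hBnz, hAcy⟩ := hstep
      have hBcy : IsCYObj k C d B := cy_complement hKS S hcy hdec hAcy hBnz
      have hle' := finrank_add_le_of_isDecomp (k := k) hdec
      have hposA := finrank_pos_of_not_isZero (k := k) hAcy.1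
      have hposB := finrank_pos_of_not_isZero (k := k) hBnz
      obtain ⟨rA, hrA, XsA, hDA, hMA⟩ := ih A (by omega) hAcy
      obtain ⟨rB, hrB, XsB, hDB, hMB⟩ := ih B (by omega) hBcy
      refine ⟨rA + rB, by omega, _, dsd_concat hdec hDA hDB, ?_⟩
      intro j
      rcases hx : finSumFinEquiv.symm j with i | i
      · exact hMA i
      · exact hMB i
end

section
/- Let 𝒜 be a Hom-finite Krull-Schmidt triangulated k-category with Serre functor F and d ∈ ℤ. Then non-isomorphic minimal d-th Calabi-Yau objects of 𝒜 are disjoint, i.e. they have no isomorphic indecomposable direct summands. -/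
open CategoryTheory CategoryTheory.Limits CategoryTheory.Pretriangulated

universe v u

set_option linter.unusedSectionVars false
set_option maxHeartbeats 1000000

namespace CYAux
open CategoryTheory CategoryTheory.Limits CYPaper

variable {k : Type u} [Field k]
variable {C : Type u} [Category.{v} C] [Preadditive C] [Linear k C]
  [HasZeroObject C] [HasShift C ℤ] [∀ n : ℤ, (shiftFunctor C n).Additive]
  [Pretriangulated C]

/-- `A` is a direct summand of `X`. -/
def Smd (A X : C) : Prop := ∃ (i : A ⟶ X) (p : X ⟶ A), i ≫ p = 𝟙 A

lemma smd_refl (X : C) : Smd X X := ⟨𝟙 X, 𝟙 X, by simp⟩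

lemma smd_trans {A B X : C} (h1 : Smd A B) (h2 : Smd B X) : Smd A X := by
  obtain ⟨i, p, hip⟩ := h1; obtain ⟨j, q, hjq⟩ := h2
  exact ⟨i ≫ j, q ≫ p, by
    rw [Category.assoc, ← Category.assoc j, hjq, Category.id_comp, hip]⟩

lemma smd_of_iso {A B : C} (e : A ≅ B) : Smd A B := ⟨e.hom, e.inv, e.hom_inv_id⟩

lemma smd_map {A X : C} (G : C ⥤ C) (h : Smd A X) : Smd (G.obj A) (G.obj X) := by
  obtain ⟨i, p, hip⟩ := h
  exact ⟨G.map i, G.map p, by rw [← G.map_comp, hip, G.map_id]⟩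

lemma smd_isZero {A X : C} (h : Smd A X) (hX : IsZero X) : IsZero A := by
  obtain ⟨i, p, hip⟩ := h
  rw [IsZero.iff_id_eq_zero] at hX ⊢
  have h2 : i ≫ 𝟙 X ≫ p = 𝟙 A := by simpa using hip
  rw [hX, zero_comp, comp_zero] at h2
  exact h2.symm

lemma isDecomp_smd_left {X A B : C} (h : IsDecomp X A B) : Smd A X := by
  obtain ⟨iA, iB, pA, pB, h1, h2, h3, h4, h5⟩ := h
  exact ⟨iA, pA, h1⟩

lemma isDecomp_symm {X A B : C} (h : IsDecomp X A B) : IsDecomp X B A := by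
  obtain ⟨iA, iB, pA, pB, h1, h2, h3, h4, h5⟩ := h
  exact ⟨iB, iA, pB, pA, h2, h1, h4, h3, by rw [add_comm]; exact h5⟩

lemma isDecomp_iso_of_isZero_right {X A B : C} (h : IsDecomp X A B) (hB : IsZero B) :
    Nonempty (X ≅ A) := by
  obtain ⟨iA, iB, pA, pB, h1, h2, h3, h4, h5⟩ := h
  rw [IsZero.iff_id_eq_zero] at hB
  refine ⟨Iso.mk pA iA ?_ h1⟩
  have h6 : pB ≫ iB = pB ≫ 𝟙 B ≫ iB := by simp
  rw [hB, zero_comp, comp_zero] at h6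
  rw [← h5, h6, add_zero]

lemma isDecomp_of_iso {X X' A A' B B' : C} (h : IsDecomp X A B)
    (eX : X ≅ X') (eA : A ≅ A') (eB : B ≅ B') : IsDecomp X' A' B' := by
  obtain ⟨iA, iB, pA, pB, h1, h2, h3, h4, h5⟩ := h
  refine ⟨eA.inv ≫ iA ≫ eX.hom, eB.inv ≫ iB ≫ eX.hom,
    eX.inv ≫ pA ≫ eA.hom, eX.inv ≫ pB ≫ eB.hom, ?_, ?_, ?_, ?_, ?_⟩
  · simp [reassoc_of% h1, h1]
  · simp [reassoc_of% h2, h2]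
  · simp [reassoc_of% h3, h3]
  · simp [reassoc_of% h4, h4]
  · have h6 : (eX.inv ≫ pA ≫ eA.hom) ≫ eA.inv ≫ iA ≫ eX.hom
        + (eX.inv ≫ pB ≫ eB.hom) ≫ eB.inv ≫ iB ≫ eX.hom
        = eX.inv ≫ (pA ≫ iA + pB ≫ iB) ≫ eX.hom := by
      simp [Preadditive.comp_add, Preadditive.add_comp]
    rw [h6, h5]; simp

lemma isDecomp_map {X A B : C} (G : C ⥤ C) [G.Additive] (h : IsDecomp X A B) :
    IsDecomp (G.obj X) (G.obj A) (G.obj B) := by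
  obtain ⟨iA, iB, pA, pB, h1, h2, h3, h4, h5⟩ := h
  refine ⟨G.map iA, G.map iB, G.map pA, G.map pB, ?_, ?_, ?_, ?_, ?_⟩
  · rw [← G.map_comp, h1, G.map_id]
  · rw [← G.map_comp, h2, G.map_id]
  · rw [← G.map_comp, h3, Functor.map_zero]
  · rw [← G.map_comp, h4, Functor.map_zero]
  · rw [← G.map_comp, ← G.map_comp, ← Functor.map_add, h5, G.map_id]

lemma isZero_map_iff (G : C ⥤ C) [G.Additive] [G.Faithful] (X : C) :
    IsZero (G.obj X) ↔ IsZero X := by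
  rw [IsZero.iff_id_eq_zero, IsZero.iff_id_eq_zero]
  constructor
  · intro h
    apply G.map_injective
    rw [G.map_id, Functor.map_zero, h]
  · intro h
    rw [← G.map_id, h, Functor.map_zero]

lemma indec_of_iso {X Y : C} (h : Indec X) (e : X ≅ Y) : Indec Y := by
  refine ⟨fun hz => h.1 (hz.of_iso e), fun A B hd => h.2 A B ?_⟩
  exact isDecomp_of_iso hd e.symm (Iso.refl A) (Iso.refl B)

lemma indec_map {X : C} (G : C ⥤ C) [G.Additive] [G.IsEquivalence] (h : Indec X) :
    Indec (G.obj X) := by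
  constructor
  · intro hz
    exact h.1 ((isZero_map_iff G X).mp hz)
  · intro A B hd
    set e := G.asEquivalence with he
    haveI : e.functor.Additive := inferInstanceAs G.Additive
    haveI : e.inverse.Additive := e.inverse_additive
    have hd' := isDecomp_map e.inverse hd
    have hd'' := isDecomp_of_iso hd' (e.unitIso.app X).symm (Iso.refl _) (Iso.refl _)
    rcases h.2 _ _ hd'' with hA | hB
    · left
      have hz : IsZero (e.functor.obj (e.inverse.obj A)) := (isZero_map_iff e.functor _).mpr hA
      exact hz.of_iso (e.counitIso.app A).symm
    · right
      have hz : IsZero (e.functor.obj (e.inverse.obj B)) := (isZero_map_iff e.functor _).mpr hB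
      exact hz.of_iso (e.counitIso.app B).symm

/-! ### Local ring lemmas -/

lemma eq_one_of_isUnit_of_idem {M : Type*} [Monoid M] {e : M} (h : IsUnit e)
    (he : e * e = e) : e = 1 := by
  obtain ⟨u, hu⟩ := h
  rw [← hu] at he ⊢
  calc (↑u : M) = (↑u * ↑u) * ↑u⁻¹ := by rw [mul_assoc, Units.mul_inv, mul_one]
  _ = ↑u * ↑u⁻¹ := by rw [he]
  _ = 1 := Units.mul_inv u

lemma isUnit_or_isUnit_ncl {R : Type*} [Ring R] [IsLocalRing R] {a b : R}
    (h : IsUnit (a + b)) : IsUnit a ∨ IsUnit b := by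
  obtain ⟨u, hu⟩ := h
  have h1 : a * ↑u⁻¹ + b * ↑u⁻¹ = 1 := by
    rw [← add_mul, ← hu, Units.mul_inv]
  rcases IsLocalRing.isUnit_or_isUnit_of_add_one h1 with h2 | h2
  · left
    have h3 := h2.mul u.isUnit
    rwa [mul_assoc, Units.inv_mul, mul_one] at h3
  · right
    have h3 := h2.mul u.isUnit
    rwa [mul_assoc, Units.inv_mul, mul_one] at h3

lemma exists_isUnit_of_isUnit_sum {R : Type*} [Ring R] [IsLocalRing R] {ι : Type*}
    (s : Finset ι) (f : ι → R) (h : IsUnit (∑ i ∈ s, f i)) : ∃ i ∈ s, IsUnit (f i) := by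
  classical
  induction s using Finset.cons_induction with
  | empty =>
    rw [Finset.sum_empty] at h
    exact absurd h not_isUnit_zero
  | cons a s ha ih =>
    rw [Finset.sum_cons] at h
    rcases isUnit_or_isUnit_ncl h with h1 | h1
    · exact ⟨a, Finset.mem_cons_self a s, h1⟩
    · obtain ⟨i, hi, hu⟩ := ih h1
      exact ⟨i, Finset.mem_cons_of_mem hi, hu⟩

/-! ### Krull–Schmidt style lemmas -/

def DSD (X : C) {ι : Type} [Fintype ι] (Xs : ι → C) : Prop :=
  ∃ (inj : ∀ j, Xs j ⟶ X) (prj : ∀ j, X ⟶ Xs j),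
    (∀ j, inj j ≫ prj j = 𝟙 (Xs j)) ∧ (∀ j j', j ≠ j' → inj j ≫ prj j' = 0) ∧
      (∑ j, prj j ≫ inj j) = 𝟙 X

lemma exchange {X Z : C} {ι : Type} [Fintype ι] {Xs : ι → C}
    (hloc : IsLocalRing (End Z)) (hZ : Smd Z X) (hXs : DSD X Xs) :
    ∃ j, Smd Z (Xs j) := by
  obtain ⟨i, p, hip⟩ := hZ
  obtain ⟨inj, prj, h1, h2, h3⟩ := hXs
  have key : (∑ j, (i ≫ prj j) ≫ (inj j ≫ p)) = 𝟙 Z := by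
    have h4 : i ≫ (∑ j, prj j ≫ inj j) ≫ p = ∑ j, (i ≫ prj j) ≫ (inj j ≫ p) := by
      simp [Preadditive.comp_sum, Preadditive.sum_comp, Category.assoc]
    rw [← h4, h3]
    simpa using hip
  let f : ι → End Z := fun j => (i ≫ prj j) ≫ (inj j ≫ p)
  have hu : IsUnit (∑ j, f j) := by
    have h6 : (∑ j, f j) = (1 : End Z) := key
    rw [h6]; exact isUnit_one
  obtain ⟨j, -, hj⟩ := exists_isUnit_of_isUnit_sum Finset.univ f hu
  obtain ⟨u, hu'⟩ := hj
  have hu'' : (↑u : End Z) = (i ≫ prj j) ≫ (inj j ≫ p) := hu'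
  let v : Z ⟶ Z := (↑u⁻¹ : End Z)
  refine ⟨j, i ≫ prj j, (inj j ≫ p) ≫ v, ?_⟩
  have h5 : ((i ≫ prj j) ≫ (inj j ≫ p)) ≫ v = 𝟙 Z := by
    have h7 := u.inv_mul
    rw [End.mul_def, hu'', End.one_def] at h7
    exact h7
  rw [← h5]
  simp [Category.assoc]

lemma iso_of_smd_indec {Z W : C} (hloc : IsLocalRing (End W)) (h : Smd Z W)
    (hZ : ¬ IsZero Z) : Nonempty (Z ≅ W) := by
  obtain ⟨i, p, hip⟩ := h
  let e : End W := p ≫ i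
  have he : e * e = e := by
    show (p ≫ i) ≫ (p ≫ i) = p ≫ i
    rw [Category.assoc, ← Category.assoc i, hip, Category.id_comp]
  have hsplit : e + (1 - e) = 1 := by rw [add_sub_cancel]
  rcases IsLocalRing.isUnit_or_isUnit_of_add_one hsplit with h1 | h1
  · have hone : e = 1 := eq_one_of_isUnit_of_idem h1 he
    have hone' : p ≫ i = 𝟙 W := hone
    exact ⟨Iso.mk i p hip hone'⟩
  · exfalso
    have he2 : (1 - e) * (1 - e) = 1 - e := by noncomm_ring [he]
    have hone : (1 : End W) - e = 1 := eq_one_of_isUnit_of_idem h1 he2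
    have hzero : e = 0 := by
      have h8 := hone
      rwa [sub_eq_iff_eq_add, left_eq_add] at h8
    apply hZ
    rw [IsZero.iff_id_eq_zero]
    have h9 : i ≫ (p ≫ i) ≫ p = 𝟙 Z := by simp [reassoc_of% hip, hip]
    rw [← h9]
    have h0 : (p ≫ i : W ⟶ W) = 0 := hzero
    rw [h0, zero_comp, comp_zero]

/-! ### Existence of decomposition into indecomposables -/

lemma dsd_single (X : C) : DSD X (fun _ : PUnit => X) := by
  refine ⟨fun _ => 𝟙 X, fun _ => 𝟙 X, fun _ => by simp, fun j j' hjj' => absurd rfl hjj', by simp⟩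

lemma dsd_glue {X A B : C} (hd : IsDecomp X A B) {ι κ : Type} [Fintype ι] [Fintype κ]
    {As : ι → C} {Bs : κ → C} (hA : DSD A As) (hB : DSD B Bs) :
    DSD X (Sum.elim As Bs) := by
  obtain ⟨iA, iB, pA, pB, e1, e2, e3, e4, e5⟩ := hd
  obtain ⟨injA, prjA, a1, a2, a3⟩ := hA
  obtain ⟨injB, prjB, b1, b2, b3⟩ := hB
  refine ⟨Sum.rec (fun j => injA j ≫ iA) (fun j => injB j ≫ iB),
          Sum.rec (fun j => pA ≫ prjA j) (fun j => pB ≫ prjB j), ?_, ?_, ?_⟩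
  · rintro (j | j)
    · show (injA j ≫ iA) ≫ (pA ≫ prjA j) = 𝟙 (As j)
      rw [Category.assoc, ← Category.assoc iA, e1, Category.id_comp, a1]
    · show (injB j ≫ iB) ≫ (pB ≫ prjB j) = 𝟙 (Bs j)
      rw [Category.assoc, ← Category.assoc iB, e2, Category.id_comp, b1]
  · rintro (j | j) (j' | j') hjj'
    · show (injA j ≫ iA) ≫ (pA ≫ prjA j') = 0
      rw [Category.assoc, ← Category.assoc iA, e1, Category.id_comp,
        a2 j j' (fun hc => hjj' (by rw [hc]))]
    · show (injA j ≫ iA) ≫ (pB ≫ prjB j') = 0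
      rw [Category.assoc, ← Category.assoc iA, e3, zero_comp, comp_zero]
    · show (injB j ≫ iB) ≫ (pA ≫ prjA j') = 0
      rw [Category.assoc, ← Category.assoc iB, e4, zero_comp, comp_zero]
    · show (injB j ≫ iB) ≫ (pB ≫ prjB j') = 0
      rw [Category.assoc, ← Category.assoc iB, e2, Category.id_comp,
        b2 j j' (fun hc => hjj' (by rw [hc]))]
  · rw [Fintype.sum_sum_type]
    have hA' : (∑ j : ι, (pA ≫ prjA j) ≫ (injA j ≫ iA)) = pA ≫ iA := by
      have : (∑ j : ι, (pA ≫ prjA j) ≫ (injA j ≫ iA)) = pA ≫ (∑ j, prjA j ≫ injA j) ≫ iA := by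
        simp [Preadditive.comp_sum, Preadditive.sum_comp, Category.assoc]
      rw [this, a3, Category.id_comp]
    have hB' : (∑ j : κ, (pB ≫ prjB j) ≫ (injB j ≫ iB)) = pB ≫ iB := by
      have : (∑ j : κ, (pB ≫ prjB j) ≫ (injB j ≫ iB)) = pB ≫ (∑ j, prjB j ≫ injB j) ≫ iB := by
        simp [Preadditive.comp_sum, Preadditive.sum_comp, Category.assoc]
      rw [this, b3, Category.id_comp]
    show (∑ j : ι, (pA ≫ prjA j) ≫ (injA j ≫ iA)) + (∑ j : κ, (pB ≫ prjB j) ≫ (injB j ≫ iB)) = 𝟙 X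
    rw [hA', hB', e5]

/-! ### Finrank and existence of indecomposable decompositions -/

section FinDim
variable [∀ X Y : C, FiniteDimensional k (X ⟶ Y)]

lemma finrank_lt_of_decomp {X A B : C} (h : IsDecomp X A B) (hB : ¬ IsZero B) :
    Module.finrank k (A ⟶ A) < Module.finrank k (X ⟶ X) := by
  obtain ⟨iA, iB, pA, pB, h1, h2, h3, h4, h5⟩ := h
  let φ : (A ⟶ A) →ₗ[k] (X ⟶ X) :=
    { toFun := fun a => pA ≫ a ≫ iA
      map_add' := fun a b => by simp [Preadditive.comp_add, Preadditive.add_comp]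
      map_smul' := fun c a => by simp [CategoryTheory.Linear.comp_smul, CategoryTheory.Linear.smul_comp] }
  let ψ : (B ⟶ B) →ₗ[k] (X ⟶ X) :=
    { toFun := fun b => pB ≫ b ≫ iB
      map_add' := fun a b => by simp [Preadditive.comp_add, Preadditive.add_comp]
      map_smul' := fun c a => by simp [CategoryTheory.Linear.comp_smul, CategoryTheory.Linear.smul_comp] }
  have hkeyA : ∀ a : A ⟶ A, iA ≫ (pA ≫ a ≫ iA) ≫ pA = a := by
    intro a
    simp only [Category.assoc, reassoc_of% h1]
    rw [h1, Category.comp_id]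
  have hφ : Function.Injective φ := by
    intro a b hab
    have h6 : iA ≫ (pA ≫ a ≫ iA) ≫ pA = iA ≫ (pA ≫ b ≫ iA) ≫ pA :=
      congrArg (fun x => iA ≫ x ≫ pA) hab
    rw [hkeyA, hkeyA] at h6
    exact h6
  have hdisj : LinearMap.range φ ⊓ LinearMap.range ψ = ⊥ := by
    rw [Submodule.eq_bot_iff]
    rintro x hx
    rw [Submodule.mem_inf] at hx
    obtain ⟨⟨a, ha⟩, ⟨b, hb⟩⟩ := hx
    have e1 : x ≫ pB = 0 := by
      rw [← ha]
      show (pA ≫ a ≫ iA) ≫ pB = 0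
      rw [Category.assoc, Category.assoc, h3, comp_zero, comp_zero]
    have e2 : x ≫ pB = pB ≫ b := by
      rw [← hb]
      show (pB ≫ b ≫ iB) ≫ pB = pB ≫ b
      rw [Category.assoc, Category.assoc, h2, Category.comp_id]
    have e3 : pB ≫ b = 0 := by rw [← e2, e1]
    rw [← hb]
    show pB ≫ b ≫ iB = 0
    rw [← Category.assoc, e3, zero_comp]
  have hψnz : ψ (𝟙 B) ≠ 0 := by
    intro hc
    apply hB
    rw [IsZero.iff_id_eq_zero]
    have hc' : pB ≫ 𝟙 B ≫ iB = 0 := hc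
    rw [Category.id_comp] at hc'
    calc 𝟙 B = (iB ≫ pB) ≫ (iB ≫ pB) := by rw [h2, Category.id_comp]
    _ = iB ≫ (pB ≫ iB) ≫ pB := by simp [Category.assoc]
    _ = 0 := by rw [hc', zero_comp, comp_zero]
  have hr1 : Module.finrank k (A ⟶ A) = Module.finrank k (LinearMap.range φ) :=
    (LinearMap.finrank_range_of_inj hφ).symm
  have hr2 : 0 < Module.finrank k (LinearMap.range ψ) := by
    rw [Module.finrank_pos_iff]
    exact ⟨⟨⟨ψ (𝟙 B), LinearMap.mem_range_self ψ _⟩, 0, by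
      simp only [ne_eq, Submodule.mk_eq_zero]; exact hψnz⟩⟩
  have hsup := Submodule.finrank_sup_add_finrank_inf_eq (LinearMap.range φ) (LinearMap.range ψ)
  rw [hdisj, finrank_bot, add_zero] at hsup
  have hle : Module.finrank k ↥(LinearMap.range φ ⊔ LinearMap.range ψ)
      ≤ Module.finrank k (X ⟶ X) := Submodule.finrank_le _
  omega

lemma exists_indec_dsd :
    ∀ (n : ℕ) (X : C), Module.finrank k (X ⟶ X) ≤ n → ¬ IsZero X →
    ∃ (ι : Type) (_ : Fintype ι) (Xs : ι → C), DSD X Xs ∧ ∀ j, Indec (Xs j) := by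
  intro n
  induction n with
  | zero =>
    intro X hn hX
    exfalso
    have hnt : Nontrivial (X ⟶ X) :=
      ⟨⟨𝟙 X, 0, by rwa [Ne, ← IsZero.iff_id_eq_zero]⟩⟩
    have := Module.finrank_pos (R := k) (M := X ⟶ X)
    omega
  | succ n ih =>
    intro X hn hX
    by_cases hi : Indec X
    · exact ⟨PUnit, inferInstance, fun _ => X, dsd_single X, fun _ => hi⟩
    · have h2 : ¬ ∀ A B : C, IsDecomp X A B → IsZero A ∨ IsZero B := fun h => hi ⟨hX, h⟩
      push_neg at h2
      obtain ⟨A, B, hd, hA, hB⟩ := h2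
      have hA' : Module.finrank k (A ⟶ A) ≤ n := by
        have := finrank_lt_of_decomp (k := k) hd hB; omega
      have hB' : Module.finrank k (B ⟶ B) ≤ n := by
        have := finrank_lt_of_decomp (k := k) (isDecomp_symm hd) hA; omega
      obtain ⟨ι, fι, As, hdA, hiA⟩ := ih A hA' hA
      obtain ⟨κ, fκ, Bs, hdB, hiB⟩ := ih B hB' hB
      refine ⟨ι ⊕ κ, inferInstance, Sum.elim As Bs, dsd_glue hd hdA hdB, ?_⟩
      rintro (j | j)
      exacts [hiA j, hiB j]

end FinDim

/-! ### Splitting off a sub-biproduct -/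

lemma dsd_split [HasFiniteBiproducts C] {X : C} {ι : Type} [Fintype ι] {Xs : ι → C}
    (h : DSD X Xs) (P : ι → Prop) [DecidablePred P] :
    IsDecomp X (⨁ fun j : {j // P j} => Xs j.1) (⨁ fun j : {j // ¬ P j} => Xs j.1) := by
  obtain ⟨inj, prj, h1, h2, h3⟩ := h
  refine ⟨biproduct.desc (fun j => inj j.1), biproduct.desc (fun j => inj j.1),
    biproduct.lift (fun j => prj j.1), biproduct.lift (fun j => prj j.1),
    ?_, ?_, ?_, ?_, ?_⟩
  · apply biproduct.hom_ext'
    intro j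
    apply biproduct.hom_ext
    intro j'
    simp only [biproduct.ι_desc_assoc, Category.assoc, biproduct.lift_π, Category.comp_id]
    by_cases hjj : j = j'
    · subst hjj
      rw [h1, biproduct.ι_π_self]
    · rw [h2 _ _ (fun hc => hjj (Subtype.ext hc)), biproduct.ι_π_ne _ hjj]
  · apply biproduct.hom_ext'
    intro j
    apply biproduct.hom_ext
    intro j'
    simp only [biproduct.ι_desc_assoc, Category.assoc, biproduct.lift_π, Category.comp_id]
    by_cases hjj : j = j'
    · subst hjj
      rw [h1, biproduct.ι_π_self]
    · rw [h2 _ _ (fun hc => hjj (Subtype.ext hc)), biproduct.ι_π_ne _ hjj]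
  · apply biproduct.hom_ext'
    intro j
    apply biproduct.hom_ext
    intro j'
    simp only [biproduct.ι_desc_assoc, Category.assoc, biproduct.lift_π, zero_comp, comp_zero]
    exact h2 _ _ (fun hc => j'.2 (hc ▸ j.2))
  · apply biproduct.hom_ext'
    intro j
    apply biproduct.hom_ext
    intro j'
    simp only [biproduct.ι_desc_assoc, Category.assoc, biproduct.lift_π, zero_comp, comp_zero]
    exact h2 _ _ (fun hc => j.2 (hc ▸ j'.2))
  · rw [biproduct.lift_desc, biproduct.lift_desc, ← h3]
    have := Fintype.sum_equiv (Equiv.sumCompl P)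
      (fun j => prj ((Equiv.sumCompl P) j) ≫ inj ((Equiv.sumCompl P) j))
      (fun j => prj j ≫ inj j) (fun j => rfl)
    rw [← this, Fintype.sum_sum_type]
    rfl


/-! ### Serre duality vs Calabi-Yau -/

section SerreCY
variable [∀ X Y : C, FiniteDimensional k (X ⟶ Y)]

/-- Postcomposition with an isomorphism, as a linear equivalence. -/
@[simps] noncomputable def pcEquiv {A B : C} (e : A ≅ B) (Z : C) :
    (Z ⟶ A) ≃ₗ[k] (Z ⟶ B) where
  toFun f := f ≫ e.hom
  map_add' f g := by simp [Preadditive.add_comp]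
  map_smul' c f := by simp [CategoryTheory.Linear.smul_comp]
  invFun f := f ≫ e.inv
  left_inv f := by simp
  right_inv f := by simp

noncomputable def beta (S : Serre k C) {d : ℤ} {X : C}
    (η : ∀ Z : C, (X ⟶ Z) ≃ₗ[k] Module.Dual k (Z ⟶ X⟦d⟧)) (Z : C) :
    (Z ⟶ X⟦d⟧) ≃ₗ[k] (Z ⟶ S.F.obj X) :=
  (Module.evalEquiv k (Z ⟶ X⟦d⟧)).trans
    ((((S.η X Z).symm.trans (η Z)).dualMap).trans
      (Module.evalEquiv k (Z ⟶ S.F.obj X)).symm)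

lemma beta_spec (S : Serre k C) {d : ℤ} {X : C}
    (η : ∀ Z : C, (X ⟶ Z) ≃ₗ[k] Module.Dual k (Z ⟶ X⟦d⟧)) (Z : C)
    (u : X ⟶ Z) (v : Z ⟶ X⟦d⟧) :
    S.η X Z u (beta S η Z v) = η Z u v := by
  simp only [beta, LinearEquiv.trans_apply]
  rw [Module.apply_evalEquiv_symm_apply, LinearEquiv.dualMap_apply]
  simp

lemma serre_inj (S : Serre k C) {X Z : C} {w w' : Z ⟶ S.F.obj X}
    (h : ∀ u : X ⟶ Z, S.η X Z u w = S.η X Z u w') : w = w' := by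
  rw [← sub_eq_zero, ← Module.forall_dual_apply_eq_zero_iff k]
  intro φ
  obtain ⟨u, rfl⟩ := (S.η X Z).surjective φ
  rw [map_sub, h u, sub_self]

lemma beta_natural (S : Serre k C) {d : ℤ} {X : C}
    (η : ∀ Z : C, (X ⟶ Z) ≃ₗ[k] Module.Dual k (Z ⟶ X⟦d⟧))
    (hnat : ∀ {Z W : C} (f : Z ⟶ W) (u : X ⟶ Z) (w : W ⟶ X⟦d⟧),
        η W (u ≫ f) w = η Z u (f ≫ w))
    {Z W : C} (f : Z ⟶ W) (v : W ⟶ X⟦d⟧) :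
    beta S η Z (f ≫ v) = f ≫ beta S η W v := by
  apply serre_inj S
  intro u
  rw [beta_spec, ← hnat, ← beta_spec S η W, ← S.nat_right]

lemma cy_iso (S : Serre k C) {d : ℤ} {X : C} (h : IsCYObj k C d X) :
    Nonempty (S.F.obj X ≅ X⟦d⟧) := by
  obtain ⟨-, η, hnat⟩ := h
  set g : X⟦d⟧ ⟶ S.F.obj X := beta S η (X⟦d⟧) (𝟙 _) with hgdef
  set hh : S.F.obj X ⟶ X⟦d⟧ := (beta S η (S.F.obj X)).symm (𝟙 _) with hhdef
  have hg : beta S η (S.F.obj X) hh = 𝟙 _ := (beta S η (S.F.obj X)).apply_symm_apply _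
  have e1 : hh ≫ g = 𝟙 (S.F.obj X) := by
    have h7 := beta_natural S η hnat hh (𝟙 (X⟦d⟧))
    rw [Category.comp_id] at h7
    rw [hgdef, ← h7, hg]
  have e2 : g ≫ hh = 𝟙 (X⟦d⟧) := by
    apply (beta S η (X⟦d⟧)).injective
    rw [beta_natural S η hnat g hh, hg, Category.comp_id]
  exact ⟨Iso.mk hh g e1 e2⟩

lemma cy_of_iso (S : Serre k C) {d : ℤ} {X : C} (hX : ¬ IsZero X)
    (e : S.F.obj X ≅ X⟦d⟧) : IsCYObj k C d X := by
  refine ⟨hX, fun Z => (S.η X Z).trans ((pcEquiv (k := k) e.symm Z).dualMap), ?_⟩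
  intro Z W f u w
  simp only [LinearEquiv.trans_apply, LinearEquiv.dualMap_apply, pcEquiv_apply, Iso.symm_hom]
  rw [S.nat_right, Category.assoc]

end SerreCY


/-! ### Orbits under an autoequivalence -/

def orb (G : C ⥤ C) (Z : C) : ℕ → C
  | 0 => Z
  | n+1 => G.obj (orb G Z n)

lemma smd_orb (G : C ⥤ C) {X Z : C} (hsmd : Smd Z X) (hGX : Nonempty (G.obj X ≅ X)) :
    ∀ n, Smd (orb G Z n) X
  | 0 => hsmd
  | n+1 => smd_trans (smd_map G (smd_orb G hsmd hGX n)) (smd_of_iso hGX.some)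

lemma indec_orb (G : C ⥤ C) [G.Additive] [G.IsEquivalence] {Z : C} (hZ : Indec Z) :
    ∀ n, Indec (orb G Z n)
  | 0 => hZ
  | n+1 => indec_map G (indec_orb G hZ n)

lemma orb_cancel (G : C ⥤ C) [G.Full] [G.Faithful] {Z : C} (m : ℕ) :
    ∀ i, Nonempty (orb G Z (m + i) ≅ orb G Z i) → Nonempty (orb G Z m ≅ Z)
  | 0, h => h
  | i+1, h => orb_cancel G m i ⟨G.preimageIso h.some⟩

lemma exists_return [∀ X Y : C, FiniteDimensional k (X ⟶ Y)] (hKS : KrullSchmidt C)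
    (G : C ⥤ C) [G.Additive] [G.IsEquivalence] {X Z : C}
    (hZ : Indec Z) (hsmd : Smd Z X) (hGX : Nonempty (G.obj X ≅ X)) :
    ∃ n, 0 < n ∧ Nonempty (orb G Z n ≅ Z) := by
  have hXnz : ¬ IsZero X := fun h => hZ.1 (smd_isZero hsmd h)
  obtain ⟨ι, fι, Xs, hdsd, hind⟩ :=
    exists_indec_dsd (k := k) (Module.finrank k (X ⟶ X)) X le_rfl hXnz
  have hsel : ∀ n : ℕ, ∃ j, Nonempty (orb G Z n ≅ Xs j) := by
    intro n
    obtain ⟨j, hj⟩ := exchange (hKS _ (indec_orb G hZ n)) (smd_orb G hsmd hGX n) hdsd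
    exact ⟨j, iso_of_smd_indec (hKS _ (hind j)) hj (indec_orb G hZ n).1⟩
  choose f hf using hsel
  obtain ⟨a, b, hab, hfab⟩ := Finite.exists_ne_map_eq_of_infinite f
  have hiso : ∀ a b : ℕ, f a = f b → Nonempty (orb G Z a ≅ orb G Z b) := by
    intro a b hfab
    exact ⟨(hf a).some ≪≫ eqToIso (congrArg Xs hfab) ≪≫ (hf b).some.symm⟩
  rcases hab.lt_or_gt with h | h
  · refine ⟨b - a, Nat.sub_pos_of_lt h, orb_cancel G (b - a) a ?_⟩
    have hba : b - a + a = b := Nat.sub_add_cancel h.le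
    rw [hba]
    exact hiso b a hfab.symm
  · refine ⟨a - b, Nat.sub_pos_of_lt h, orb_cancel G (a - b) b ?_⟩
    have hba : a - b + b = a := Nat.sub_add_cancel h.le
    rw [hba]
    exact hiso a b hfab

lemma gw_iso (G : C ⥤ C) [G.Additive] [HasFiniteBiproducts C] {Z : C}
    {m' : ℕ} (hm : Nonempty (orb G Z (m' + 1) ≅ Z)) :
    Nonempty (G.obj (⨁ fun i : Fin (m' + 1) => orb G Z i.1)
      ≅ (⨁ fun i : Fin (m' + 1) => orb G Z i.1)) := by
  have w : ∀ j : Fin (m' + 1),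
      orb G Z ((finRotate (m' + 1) j) : Fin (m' + 1)).1 ≅ orb G Z (j.1 + 1) := by
    intro j
    by_cases hj : j = Fin.last m'
    · subst hj
      have h0 : ((finRotate (m' + 1) (Fin.last m')) : Fin (m' + 1)).1 = 0 := by
        rw [finRotate_succ_apply, Fin.val_add_one]
        simp
      exact eqToIso (congrArg (orb G Z) h0) ≪≫ hm.some.symm
    · have h0 : ((finRotate (m' + 1) j) : Fin (m' + 1)).1 = j.1 + 1 := by
        rw [finRotate_succ_apply, Fin.val_add_one]
        simp [hj]
      exact eqToIso (congrArg (orb G Z) h0)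
  refine ⟨(Functor.mapBiproduct G _) ≪≫ ?_⟩
  exact biproduct.whiskerEquiv (finRotate (m' + 1)) w

/-! ### The key minimality lemma -/

lemma min_iso_orbW
    [∀ X Y : C, FiniteDimensional k (X ⟶ Y)] [HasFiniteBiproducts C]
    (hKS : KrullSchmidt C) (G : C ⥤ C) [G.Additive] [G.IsEquivalence]
    {d : ℤ} (hcy : ∀ A : C, ¬ IsZero A → Nonempty (G.obj A ≅ A) → IsCYObj k C d A)
    {X Z : C} (hX : IsMinCYObj k d X) (hGX : Nonempty (G.obj X ≅ X))
    (hZ : Indec Z) (hsmd : Smd Z X)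
    {m : ℕ} (hm0 : 0 < m) (hm : Nonempty (orb G Z m ≅ Z))
    (hdist : ∀ i j, i < m → j < m → Nonempty (orb G Z i ≅ orb G Z j) → i = j) :
    Nonempty (X ≅ ⨁ fun i : Fin m => orb G Z i.1) := by
  classical
  have hXnz : ¬ IsZero X := fun h => hZ.1 (smd_isZero hsmd h)
  obtain ⟨ι, fι, Xs, hdsd, hind⟩ :=
    exists_indec_dsd (k := k) (Module.finrank k (X ⟶ X)) X le_rfl hXnz
  have hsel : ∀ i : Fin m, ∃ j, Nonempty (orb G Z i.1 ≅ Xs j) := by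
    intro i
    obtain ⟨j, hj⟩ := exchange (hKS _ (indec_orb G hZ i.1)) (smd_orb G hsmd hGX i.1) hdsd
    exact ⟨j, iso_of_smd_indec (hKS _ (hind j)) hj (indec_orb G hZ i.1).1⟩
  choose sg hsg using hsel
  have hsginj : Function.Injective sg := by
    intro i i' hii
    have h7 : Nonempty (orb G Z i.1 ≅ orb G Z i'.1) :=
      ⟨(hsg i).some ≪≫ eqToIso (congrArg Xs hii) ≪≫ (hsg i').some.symm⟩
    exact Fin.ext (hdist i.1 i'.1 i.2 i'.2 h7)
  set P : ι → Prop := fun j => ∃ i : Fin m, sg i = j with hP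
  have hsplit := dsd_split hdsd P
  set A := (⨁ fun j : {j // P j} => Xs j.1) with hA
  set B := (⨁ fun j : {j // ¬ P j} => Xs j.1) with hB
  -- the equivalence Fin m ≃ {j // P j}
  have hbij : Function.Bijective (fun i : Fin m => (⟨sg i, ⟨i, rfl⟩⟩ : {j // P j})) := by
    constructor
    · intro i i' h7
      exact hsginj (congrArg Subtype.val h7)
    · rintro ⟨j, i, rfl⟩
      exact ⟨i, rfl⟩
  set e : Fin m ≃ {j // P j} := Equiv.ofBijective _ hbij with he
  have hwA : Nonempty ((⨁ fun i : Fin m => orb G Z i.1) ≅ A) := by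
    refine ⟨biproduct.whiskerEquiv e (fun i => ?_)⟩
    exact (hsg i).some.symm
  -- A is nonzero
  have hZA : Smd Z A := by
    refine smd_trans ?_ (smd_of_iso hwA.some)
    exact ⟨biproduct.ι (fun i : Fin m => orb G Z i.1) ⟨0, hm0⟩,
      biproduct.π (fun i : Fin m => orb G Z i.1) ⟨0, hm0⟩, biproduct.ι_π_self _ _⟩
  have hAnz : ¬ IsZero A := fun h => hZ.1 (smd_isZero hZA h)
  -- A admits a G-iso
  obtain ⟨m', rfl⟩ : ∃ m', m = m' + 1 := ⟨m - 1, (Nat.succ_pred_eq_of_pos hm0).symm⟩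
  have hGW := gw_iso G hm
  have hGA : Nonempty (G.obj A ≅ A) :=
    ⟨G.mapIso hwA.some.symm ≪≫ hGW.some ≪≫ hwA.some⟩
  have hAcy : IsCYObj k C d A := hcy A hAnz hGA
  -- minimality forces B to vanish
  by_cases hBz : IsZero B
  · obtain ⟨eXA⟩ := isDecomp_iso_of_isZero_right hsplit hBz
    exact ⟨eXA ≪≫ hwA.some.symm⟩
  · exact absurd hAcy (hX.2 A B hsplit hBz)

end CYAux




open CategoryTheory CategoryTheory.Limits CategoryTheory.Pretriangulated CYPaper CYAux

/-- **Statement 10** (Theorem 4.2 (iii)). Let `𝒜` be a Hom-finite Krull-Schmidt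
triangulated `k`-category with Serre functor `F` and `d ∈ ℤ`. Then non-isomorphic
minimal `d`-th Calabi-Yau objects are disjoint: they have no isomorphic
indecomposable direct summands. -/
theorem stmt_10 (k : Type u) [Field k] (C : Type u) [Category.{v} C] [Preadditive C]
    [Linear k C] [HasZeroObject C] [HasShift C ℤ]
    [∀ n : ℤ, (shiftFunctor C n).Additive] [Pretriangulated C]
    [∀ X Y : C, FiniteDimensional k (X ⟶ Y)]
    (hKS : KrullSchmidt C) (S : Serre k C)
    (d : ℤ) (X Y : C) (hX : IsMinCYObj k d X) (hY : IsMinCYObj k d Y)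
    (hne : IsEmpty (X ≅ Y)) :
    ¬ ∃ (Z ZX ZY : C), Indec Z ∧ IsDecomp X Z ZX ∧ IsDecomp Y Z ZY := by
  rintro ⟨Z, ZX, ZY, hZ, hdX, hdY⟩
  classical
  haveI : HasFiniteBiproducts C := HasFiniteBiproducts.of_hasFiniteProducts
  haveI hFadd : S.F.Additive := S.additive
  haveI hFeq : S.F.IsEquivalence := S.isEquiv
  set G : C ⥤ C := S.F ⋙ shiftFunctor C (-d) with hGdef
  haveI : G.Additive := by rw [hGdef]; infer_instance
  haveI : G.IsEquivalence := by rw [hGdef]; infer_instance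
  have hGiso : ∀ W : C, Nonempty (S.F.obj W ≅ (W⟦d⟧)) → Nonempty (G.obj W ≅ W) := by
    rintro W ⟨e⟩
    exact ⟨(shiftFunctor C (-d)).mapIso e ≪≫
      (shiftFunctorCompIsoId C d (-d) (by omega)).app W⟩
  have hGiso' : ∀ W : C, Nonempty (G.obj W ≅ W) → Nonempty (S.F.obj W ≅ (W⟦d⟧)) := by
    rintro W ⟨e⟩
    exact ⟨((shiftFunctorCompIsoId C (-d) d (by omega)).app (S.F.obj W)).symm ≪≫
      (shiftFunctor C d).mapIso e⟩
  have hGX : Nonempty (G.obj X ≅ X) := hGiso X (cy_iso S hX.1)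
  have hGY : Nonempty (G.obj Y ≅ Y) := hGiso Y (cy_iso S hY.1)
  have hcy : ∀ A : C, ¬ IsZero A → Nonempty (G.obj A ≅ A) → IsCYObj k C d A :=
    fun A hA h => cy_of_iso S hA (hGiso' A h).some
  have hex : ∃ n, 0 < n ∧ Nonempty (orb G Z n ≅ Z) :=
    exists_return (k := k) hKS G hZ (isDecomp_smd_left hdX) hGX
  obtain ⟨hm0, hm⟩ := Nat.find_spec hex
  have hdist : ∀ i j, i < Nat.find hex → j < Nat.find hex →
      Nonempty (orb G Z i ≅ orb G Z j) → i = j := by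
    intro i j hi hj hiso
    by_contra hne'
    have hgen : ∀ a b : ℕ, a < b → b < Nat.find hex →
        Nonempty (orb G Z a ≅ orb G Z b) → False := by
      intro a b hab hbm hiso2
      have h1 : b - a + a = b := Nat.sub_add_cancel hab.le
      have h2 : Nonempty (orb G Z (b - a + a) ≅ orb G Z a) := by
        rw [h1]; exact ⟨hiso2.some.symm⟩
      have h3 := orb_cancel G (b - a) a h2
      exact Nat.find_min hex (lt_of_le_of_lt (Nat.sub_le b a) hbm)
        ⟨Nat.sub_pos_of_lt hab, h3⟩
    rcases Ne.lt_or_gt hne' with h | h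
    · exact hgen i j h hj hiso
    · exact hgen j i h hi ⟨hiso.some.symm⟩
  have h1 := min_iso_orbW (k := k) hKS G hcy hX hGX hZ (isDecomp_smd_left hdX) hm0 hm hdist
  have h2 := min_iso_orbW (k := k) hKS G hcy hY hGY hZ (isDecomp_smd_left hdY) hm0 hm hdist
  exact hne.false (h1.some ≪≫ h2.some.symm)
end
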